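/- arXiv:2211.15277 — 2 statements merged into one kernel-verified Lean document; each statement's English description precedes it below -/
import Mathlib

section
/- Let 𝔅_n^+ = {π ∈ 𝔅_n : π_n > 0} and B_n^+(s,t,q) = Σ_{π∈𝔅_n^+} s^{edes_B(π)} t^{odes_B(π)} q^{inv_B(π)}. For even positive integers n, B_n^+(s,t,q) = Σ_{r=0}^{n/2−1} q^{r(2r+1)}·binom(n,2r+1)_q·B_{n−2r−1}(s,t,q)·(s−1)^r(t−1)^r + Σ_{r=1}^{n/2} q^{r(2r−1)}·binom(n,2r)_q·B_{n−2r}(s,t,q)·(s−1)^{r−1}(t−1)^r. For odd positive integers n, B_n^+(s,t,q) = Σ_{r=0}^{⌊n/2⌋} q^{r(2r+1)}·binom(n,2r+1)_q·B_{n−2r−1}(s,t,q)·(s−1)^r(t−1)^r + Σ_{r=1}^{⌊n/2⌋} q^{r(2r−1)}·binom(n,2r)_q·B_{n−2r}(s,t,q)·(s−1)^r(t−1)^{r−1}. (Here q^{r(2r+1)} = q^{C(2r+1,2)} and q^{r(2r−1)} = q^{C(2r,2)}.) -/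
open Finset

/-- The hyperoctahedral group `𝔅_n`, encoded as (permutation of positions, signs):
the signed permutation sends `i+1` to `±(σ i + 1)`. -/
abbrev BG (n : ℕ) := Equiv.Perm (Fin n) × (Fin n → Bool)

/-- The value `π_i` (for `1 ≤ i ≤ n`) of the signed permutation, with `π_0 = 0`. -/
def bval {n : ℕ} (w : BG n) (i : ℕ) : ℤ :=
  if h : 1 ≤ i ∧ i ≤ n then
    (if w.2 ⟨i - 1, by omega⟩ then -1 else 1) * (((w.1 ⟨i - 1, by omega⟩ : Fin n) : ℕ) + 1 : ℤ)
  else 0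

/-- `edes_B`: even `i ∈ {0,…,n−1}` with `π_i > π_{i+1}`. -/
def edesB {n : ℕ} (w : BG n) : ℕ :=
  ((range n).filter fun i => Even i ∧ bval w (i + 1) < bval w i).card

/-- `odes_B`: odd `i ∈ {0,…,n−1}` with `π_i > π_{i+1}`. -/
def odesB {n : ℕ} (w : BG n) : ℕ :=
  ((range n).filter fun i => Odd i ∧ bval w (i + 1) < bval w i).card

/-- `easc_B`: even `i ∈ {0,…,n−1}` with `π_i < π_{i+1}`. -/
def eascB {n : ℕ} (w : BG n) : ℕ :=
  ((range n).filter fun i => Even i ∧ bval w i < bval w (i + 1)).card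

/-- `oasc_B`: odd `i ∈ {0,…,n−1}` with `π_i < π_{i+1}`. -/
def oascB {n : ℕ} (w : BG n) : ℕ :=
  ((range n).filter fun i => Odd i ∧ bval w i < bval w (i + 1)).card

/-- type B inversion number -/
def invB {n : ℕ} (w : BG n) : ℕ :=
  ((Icc 1 n ×ˢ Icc 1 n).filter fun p => p.1 < p.2 ∧ bval w p.2 < bval w p.1).card
  + ((Icc 1 n ×ˢ Icc 1 n).filter fun p => p.1 < p.2 ∧ bval w p.2 < -bval w p.1).card
  + ((Icc 1 n).filter fun i => bval w i < 0).card

/-- `B_n(s,t,q)` -/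
noncomputable def Bpoly {A : Type*} [CommRing A] (n : ℕ) (s t q : A) : A :=
  ∑ w : BG n, s ^ edesB w * t ^ odesB w * q ^ invB w

/-- `B_n(1,q)` -/
noncomputable def BOne {A : Type*} [CommRing A] (n : ℕ) (q : A) : A :=
  ∑ w : BG n, q ^ invB w

/-- `[k]_q` -/
def qInt {A : Type*} [CommRing A] (k : ℕ) (q : A) : A := ∑ i ∈ range k, q ^ i

/-- `[k]_q!` -/
def qFact {A : Type*} [CommRing A] (k : ℕ) (q : A) : A := ∏ i ∈ range k, qInt (i + 1) q

noncomputable section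

/-- the field `ℚ(q,s,t)` -/
abbrev K : Type := FractionRing (MvPolynomial (Fin 3) ℚ)

def qK : K := algebraMap (MvPolynomial (Fin 3) ℚ) K (MvPolynomial.X 0)
def sK : K := algebraMap (MvPolynomial (Fin 3) ℚ) K (MvPolynomial.X 1)
def tK : K := algebraMap (MvPolynomial (Fin 3) ℚ) K (MvPolynomial.X 2)

/-- the ring `R = ℚ(q,s,t)[M]/(M² − (1−s)(1−t))` -/
abbrev R : Type := AdjoinRoot ((Polynomial.X : Polynomial K) ^ 2
  - Polynomial.C ((1 - sK) * (1 - tK)))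

/-- the square root `M` of `(1−s)(1−t)` -/
def M : R := AdjoinRoot.root _

def ofK : K →+* R := algebraMap K R

/-- the Gaussian binomial coefficient `[n]_q!/([r]_q! [n−r]_q!)` -/
def qBinom (n r : ℕ) (q : K) : K := qFact n q / (qFact r q * qFact (n - r) q)

/-- `B_n^+(s,t,q)`, the sum over `π ∈ 𝔅_n` with `π_n > 0` -/
def BplusPoly (n : ℕ) (s t q : K) : K :=
  ∑ w ∈ (univ.filter fun w : BG n => 0 < bval w n),
    s ^ edesB w * t ^ odesB w * q ^ invB w

/-! ### Auxiliary development for the proof -/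

section AuxBval

variable {n : ℕ}

theorem bval_def (w : BG n) (i : ℕ) (h1 : 1 ≤ i) (h2 : i ≤ n) :
    bval w i = (if w.2 ⟨i - 1, by omega⟩ then (-1 : ℤ) else 1) *
      (((w.1 ⟨i - 1, by omega⟩ : Fin n) : ℕ) + 1 : ℤ) := dif_pos ⟨h1, h2⟩

theorem bval_zero (w : BG n) : bval w 0 = 0 := dif_neg (by omega)

theorem sign_lt_zero (ε : Bool) (a : ℕ) :
    (if ε then (-1 : ℤ) else 1) * ((a : ℕ) + 1) < 0 ↔ ε = true := by
  cases ε <;> simp <;> omega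

theorem zero_lt_sign (ε : Bool) (a : ℕ) :
    0 < (if ε then (-1 : ℤ) else 1) * ((a : ℕ) + 1) ↔ ε = false := by
  cases ε <;> simp <;> omega

theorem sign_lt_sign (ε δ : Bool) (a b a' b' : ℕ) (hlt : a < b ↔ a' < b')
    (hgt : b < a ↔ b' < a') :
    ((if ε then (-1 : ℤ) else 1) * ((a : ℕ) + 1) < (if δ then (-1 : ℤ) else 1) * ((b : ℕ) + 1)) ↔
    ((if ε then (-1 : ℤ) else 1) * ((a' : ℕ) + 1) < (if δ then (-1 : ℤ) else 1) * ((b' : ℕ) + 1)) := by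
  cases ε <;> cases δ <;> simp <;> omega

theorem neg_sign (ε : Bool) (a : ℕ) :
    -((if ε then (-1 : ℤ) else 1) * ((a : ℕ) + 1)) = (if !ε then (-1 : ℤ) else 1) * ((a : ℕ) + 1) := by
  cases ε <;> simp

/-- positivity of a value forces the sign bit to be `false`. -/
theorem bval_pos_elim (w : BG n) (i : ℕ) (h1 : 1 ≤ i) (h2 : i ≤ n) (hp : 0 < bval w i) :
    w.2 ⟨i - 1, by omega⟩ = false ∧
      bval w i = ((w.1 ⟨i - 1, by omega⟩ : Fin n) : ℕ) + 1 := by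
  rw [bval_def w i h1 h2] at hp ⊢
  have := (zero_lt_sign (w.2 ⟨i - 1, by omega⟩) ((w.1 ⟨i - 1, by omega⟩ : Fin n) : ℕ)).1 hp
  rw [this]
  simp

/-- values are strictly decreasing along a run of descents -/
theorem bval_chain (w : BG n) (a : ℕ) (hd : ∀ j ∈ Ico a n, bval w (j + 1) < bval w j) :
    ∀ i j, a ≤ i → i < j → j ≤ n → bval w j < bval w i := by
  intro i j hai hij hjn
  induction j with
  | zero => omega
  | succ j ih =>
    rcases Nat.lt_or_ge i j with h | h
    · exact lt_trans (hd j (by simp [Finset.mem_Ico]; omega)) (ih h (by omega))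
    · have : i = j := by omega
      subst this
      exact hd i (by simp [Finset.mem_Ico]; omega)

theorem bval_chain_le (w : BG n) (a : ℕ) (hd : ∀ j ∈ Ico a n, bval w (j + 1) < bval w j) :
    ∀ i j, a ≤ i → i ≤ j → j ≤ n → bval w j ≤ bval w i := by
  intro i j hai hij hjn
  rcases Nat.lt_or_ge i j with h | h
  · exact le_of_lt (bval_chain w a hd i j hai h hjn)
  · have : i = j := by omega
    subst this; rfl

end AuxBval

section AuxDefs

variable {A : Type*} [CommRing A]

open scoped Classical in
/-- `π ∈ 𝔅_n` whose last `k` values are strictly decreasing and end positive. -/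
noncomputable def Dset (n k : ℕ) : Finset (BG n) :=
  univ.filter fun w => 0 < bval w n ∧ ∀ j ∈ Ico (n - k + 1) n, bval w (j + 1) < bval w j

/-- weight with descents counted only at positions `0,…,m-1`. -/
noncomputable def wtN (s t q : A) {n : ℕ} (m : ℕ) (w : BG n) : A :=
  s ^ (((range m).filter fun i => Even i ∧ bval w (i + 1) < bval w i).card) *
  t ^ (((range m).filter fun i => Odd i ∧ bval w (i + 1) < bval w i).card) * q ^ invB w

noncomputable def Aprod (s t : A) (n k : ℕ) : A :=
  ∏ j ∈ Ico (n - k + 1) n, ((if Even j then s else t) - 1)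

noncomputable def Usum (s t q : A) (n k : ℕ) : A := ∑ w ∈ Dset n k, wtN s t q (n - k) w

noncomputable def Vsum (s t q : A) (n k : ℕ) : A := ∑ w ∈ Dset n k, wtN s t q (n - k + 1) w

def wSn (n : ℕ) (S : Finset ℕ) : ℕ :=
  ((S ×ˢ (range n \ S)).filter fun p : ℕ × ℕ => p.1 < p.2).card

noncomputable def Gpoly (n k : ℕ) (q : A) : A :=
  ∑ S ∈ (range n).powersetCard k, q ^ wSn n S

end AuxDefs

section AuxTelescope

variable {A : Type*} [CommRing A] (s t q : A)

theorem mem_Dset {n k : ℕ} (w : BG n) :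
    w ∈ Dset n k ↔ 0 < bval w n ∧ ∀ j ∈ Ico (n - k + 1) n, bval w (j + 1) < bval w j := by
  classical simp [Dset]

theorem Dset_succ {n k : ℕ} (hk : 1 ≤ k) (hkn : k < n) (w : BG n) :
    w ∈ Dset n (k + 1) ↔ w ∈ Dset n k ∧ bval w (n - k + 1) < bval w (n - k) := by
  rw [mem_Dset, mem_Dset]
  have h1 : n - (k + 1) + 1 = n - k := by omega
  have h2 : Ico (n - k) n = insert (n - k) (Ico (n - k + 1) n) := by
    ext j; simp only [Finset.mem_Ico, Finset.mem_insert]; omega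
  rw [h1, h2, Finset.forall_mem_insert]
  tauto

theorem wtN_succ {n k : ℕ} (hk : 1 ≤ k) (hkn : k ≤ n) (w : BG n) :
    wtN s t q (n - k + 1) w =
      wtN s t q (n - k) w * (if bval w (n - k + 1) < bval w (n - k) then
        (if Even (n - k) then s else t) else 1) := by
  have hr : range (n - k + 1) = insert (n - k) (range (n - k)) := Finset.range_add_one
  have hnm : ∀ (p : ℕ → Prop) (hp : DecidablePred p),
      n - k ∉ (range (n - k)).filter fun i => p i ∧ bval w (i + 1) < bval w i := by
    intro p hp hmem
    exact absurd (Finset.mem_range.1 (Finset.mem_filter.1 hmem).1) (lt_irrefl _)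
  unfold wtN
  rw [hr, Finset.filter_insert, Finset.filter_insert]
  by_cases hd : bval w (n - k + 1) < bval w (n - k)
  · by_cases he : Even (n - k)
    · rw [if_pos ⟨he, hd⟩, if_neg (fun hc => (Nat.not_even_iff_odd.2 hc.1) he),
        Finset.card_insert_of_notMem (hnm _ _), if_pos hd, if_pos he, pow_succ]
      ring
    · rw [if_neg (fun hc => he hc.1), if_pos ⟨Nat.not_even_iff_odd.1 he, hd⟩,
        Finset.card_insert_of_notMem (hnm _ _), if_pos hd, if_neg he, pow_succ]
      ring
  · rw [if_neg (fun hc => hd hc.2), if_neg (fun hc => hd hc.2), if_neg hd, mul_one]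

theorem V_step {n k : ℕ} (hk : 1 ≤ k) (hkn : k < n) :
    Aprod s t n k * Vsum s t q n k =
      Aprod s t n k * Usum s t q n k + Aprod s t n (k + 1) * Vsum s t q n (k + 1) := by
  classical
  have hsplit : Vsum s t q n k = Usum s t q n k +
      ∑ w ∈ Dset n (k + 1), ((if Even (n - k) then s else t) - 1) * wtN s t q (n - k) w := by
    unfold Vsum Usum
    have h1 : ∀ w ∈ Dset n k, wtN s t q (n - k + 1) w = wtN s t q (n - k) w +
        (if bval w (n - k + 1) < bval w (n - k) then
          ((if Even (n - k) then s else t) - 1) * wtN s t q (n - k) w else 0) := by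
      intro w _
      rw [wtN_succ s t q hk (le_of_lt hkn) w]
      split_ifs <;> ring
    rw [Finset.sum_congr rfl h1, Finset.sum_add_distrib]
    congr 1
    rw [← Finset.sum_filter]
    apply Finset.sum_congr _ (fun _ _ => rfl)
    ext w
    rw [Finset.mem_filter, Dset_succ hk hkn w]
  have hA : Aprod s t n (k + 1) = ((if Even (n - k) then s else t) - 1) * Aprod s t n k := by
    unfold Aprod
    have h1 : n - (k + 1) + 1 = n - k := by omega
    have h2 : Ico (n - k) n = insert (n - k) (Ico (n - k + 1) n) := by
      ext j; simp only [Finset.mem_Ico, Finset.mem_insert]; omega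
    rw [h1, h2, Finset.prod_insert (by simp [Finset.mem_Ico])]
  have hV : Vsum s t q n (k + 1) = ∑ w ∈ Dset n (k + 1), wtN s t q (n - k) w := by
    unfold Vsum
    rw [show n - (k + 1) + 1 = n - k by omega]
  rw [hsplit, hA, hV, mul_add, Finset.mul_sum, Finset.mul_sum]
  congr 1
  apply Finset.sum_congr rfl
  intro w _
  ring

theorem V_top {n : ℕ} (hn : 0 < n) : Vsum s t q n n = Usum s t q n n := by
  unfold Vsum Usum
  apply Finset.sum_congr rfl
  intro w hw
  rw [mem_Dset] at hw
  have h1 : 0 < bval w 1 :=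
    lt_of_lt_of_le hw.1 (bval_chain_le w (n - n + 1) hw.2 1 n (by omega) hn (le_refl n))
  have hne : ¬ bval w (0 + 1) < bval w 0 := by
    rw [bval_zero, show (0 : ℕ) + 1 = 1 from rfl]; omega
  rw [show n - n + 1 = 1 by omega, show n - n = 0 by omega]
  unfold wtN
  simp [Finset.range_one, Finset.filter_singleton, hne]

theorem V_chain {n : ℕ} : ∀ d k, k + d = n → 1 ≤ k →
    Aprod s t n k * Vsum s t q n k = ∑ j ∈ Icc k n, Aprod s t n j * Usum s t q n j := by
  intro d
  induction d with
  | zero =>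
    intro k hkd hk
    have hkn : k = n := by omega
    subst hkn
    rw [Finset.Icc_self, Finset.sum_singleton, V_top s t q (by omega)]
  | succ d ih =>
    intro k hkd hk
    have hkn : k < n := by omega
    rw [V_step s t q hk hkn, ih (k + 1) (by omega) (by omega)]
    have h2 : Icc k n = insert k (Icc (k + 1) n) := by
      ext j; simp only [Finset.mem_Icc, Finset.mem_insert]; omega
    rw [h2, Finset.sum_insert (by simp)]

theorem Bplus_eq_sum {n : ℕ} (hn : 0 < n) :
    (∑ w ∈ univ.filter (fun w : BG n => 0 < bval w n),
      s ^ edesB w * t ^ odesB w * q ^ invB w) =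
    ∑ k ∈ Icc 1 n, Aprod s t n k * Usum s t q n k := by
  classical
  rw [← V_chain s t q (n - 1) 1 (by omega) (by omega)]
  have hA : Aprod s t n 1 = 1 := by
    unfold Aprod
    rw [show n - 1 + 1 = n by omega]
    simp
  rw [hA, one_mul]
  unfold Vsum
  rw [show n - 1 + 1 = n by omega]
  apply Finset.sum_congr
  · ext w
    simp [Dset, show n - 1 + 1 = n by omega]
  · intro w _
    rfl

end AuxTelescope

section AuxGauss

variable {A : Type*} [CommRing A] (q : A)

theorem qInt_add (a b : ℕ) : qInt (a + b) q = qInt a q + q ^ a * qInt b q := by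
  induction b with
  | zero => simp [qInt]
  | succ b ih =>
    rw [show a + (b + 1) = (a + b) + 1 by omega]
    unfold qInt at *
    rw [Finset.sum_range_succ, ih, Finset.sum_range_succ]
    rw [pow_add]
    ring

theorem qFact_succ (j : ℕ) : qFact (j + 1) q = qFact j q * qInt (j + 1) q :=
  Finset.prod_range_succ _ _

theorem wSn_of_subset (n : ℕ) (S : Finset ℕ) (hs : S ⊆ range n) :
    wSn (n + 1) S = wSn n S + S.card := by
  classical
  have hns : n ∉ S := fun h => by simpa using Finset.mem_range.1 (hs h)
  have hc : range (n + 1) \ S = {n} ∪ (range n \ S) := by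
    ext j
    simp only [Finset.mem_sdiff, Finset.mem_range, Finset.mem_union, Finset.mem_singleton]
    constructor
    · rintro ⟨hj, hjs⟩
      rcases Nat.lt_or_ge j n with h | h
      · exact Or.inr ⟨h, hjs⟩
      · exact Or.inl (by omega)
    · rintro (rfl | ⟨hj, hjs⟩)
      · exact ⟨by omega, hns⟩
      · exact ⟨by omega, hjs⟩
  unfold wSn
  rw [hc, Finset.product_union, Finset.filter_union,
    Finset.card_union_of_disjoint (Finset.disjoint_filter_filter (by
      rw [Finset.disjoint_left]
      rintro ⟨a, b⟩ hab hab'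
      rw [Finset.mem_product, Finset.mem_singleton] at hab
      rw [Finset.mem_product, Finset.mem_sdiff, Finset.mem_range] at hab'
      omega))]
  rw [Finset.filter_true_of_mem (by
    rintro ⟨a, b⟩ hab
    rw [Finset.mem_product, Finset.mem_singleton] at hab
    have := Finset.mem_range.1 (hs hab.1)
    simp only []
    omega)]
  rw [Finset.card_product, Finset.card_singleton, mul_one]
  omega

theorem wSn_insert (n : ℕ) (S : Finset ℕ) (hs : S ⊆ range n) :
    wSn (n + 1) (insert n S) = wSn n S := by
  classical
  have hc : range (n + 1) \ insert n S = range n \ S := by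
    ext j
    simp only [Finset.mem_sdiff, Finset.mem_range, Finset.mem_insert, not_or]
    constructor
    · rintro ⟨h1, h2, h3⟩
      exact ⟨by omega, h3⟩
    · rintro ⟨h1, h2⟩
      exact ⟨by omega, by omega, h2⟩
  unfold wSn
  rw [hc, Finset.insert_eq, Finset.union_product, Finset.filter_union]
  have h1 : Finset.filter (fun p : ℕ × ℕ => p.1 < p.2) (({n} : Finset ℕ) ×ˢ (range n \ S)) = ∅ := by
    apply Finset.filter_false_of_mem
    rintro ⟨a, b⟩ hab
    rw [Finset.mem_product, Finset.mem_singleton] at hab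
    have := (Finset.mem_sdiff.1 hab.2).1
    rw [Finset.mem_range] at this
    simp only []
    omega
  rw [h1, Finset.empty_union]

theorem Gpoly_rec (n k : ℕ) :
    Gpoly (n + 1) (k + 1) q = q ^ (k + 1) * Gpoly n (k + 1) q + Gpoly n k q := by
  classical
  have hr : range (n + 1) = insert n (range n) := Finset.range_add_one
  unfold Gpoly
  rw [hr, Finset.powersetCard_succ_insert (by simp)]
  rw [Finset.sum_union (by
    rw [Finset.disjoint_left]
    intro S hS hS'
    rw [Finset.mem_powersetCard] at hS
    rcases Finset.mem_image.1 hS' with ⟨T, _, rfl⟩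
    exact absurd (Finset.mem_range.1 (hS.1 (Finset.mem_insert_self n T))) (lt_irrefl n))]
  congr 1
  · rw [Finset.mul_sum]
    apply Finset.sum_congr rfl
    intro S hS
    rw [Finset.mem_powersetCard] at hS
    rw [wSn_of_subset n S hS.1, hS.2, pow_add, mul_comm]
  · rw [Finset.sum_image (by
      intro S hS T hT hST
      rw [Finset.mem_coe, Finset.mem_powersetCard] at hS hT
      have hnS : n ∉ S := fun h => by simpa using Finset.mem_range.1 (hS.1 h)
      have hnT : n ∉ T := fun h => by simpa using Finset.mem_range.1 (hT.1 h)
      rw [← Finset.erase_insert hnS, ← Finset.erase_insert hnT, hST])]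
    apply Finset.sum_congr rfl
    intro S hS
    rw [Finset.mem_powersetCard] at hS
    rw [wSn_insert n S hS.1]

theorem Gpoly_mul : ∀ n k : ℕ, k ≤ n → Gpoly n k q * (qFact k q * qFact (n - k) q) = qFact n q := by
  intro n
  induction n with
  | zero =>
    intro k hk
    interval_cases k
    simp [Gpoly, wSn, qFact]
  | succ n ih =>
    intro k hk
    match k with
    | 0 =>
      have : Gpoly (n + 1) 0 q = 1 := by simp [Gpoly, wSn]
      rw [this]
      simp [qFact]
    | (k' + 1) =>
      rcases Nat.lt_or_ge k' n with hlt | hge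
      · -- k' + 1 ≤ n
        have h1 := ih (k' + 1) (by omega)
        have h2 := ih k' (by omega)
        have e2 : qFact (n - k') q = qFact (n - k' - 1) q * qInt (n - k') q := by
          have h := qFact_succ q (n - k' - 1)
          rw [show n - k' - 1 + 1 = n - k' by omega] at h
          exact h
        have e3 : qFact (k' + 1) q = qFact k' q * qInt (k' + 1) q := qFact_succ q k'
        have e4 : qFact (n + 1) q = qFact n q * qInt (n + 1) q := qFact_succ q n
        have e5 : qInt (n + 1) q = qInt (k' + 1) q + q ^ (k' + 1) * qInt (n - k') q := by
          rw [← qInt_add]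
          congr 1
          omega
        rw [show n - (k' + 1) = n - k' - 1 by omega, e3] at h1
        rw [e2] at h2
        rw [Gpoly_rec, show n + 1 - (k' + 1) = n - k' by omega, e2, e3, e4, e5]
        linear_combination (q ^ (k' + 1) * qInt (n - k') q) * h1 + qInt (k' + 1) q * h2
      · -- k' = n
        have hk2 : k' = n := by omega
        have hzero : Gpoly n (k' + 1) q = 0 := by
          unfold Gpoly
          rw [Finset.powersetCard_eq_empty.2 (by simp [hk2]), Finset.sum_empty]
        have h := ih n (le_refl n)
        rw [show n - n = 0 by omega, show qFact 0 q = 1 by simp [qFact], mul_one] at h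
        rw [Gpoly_rec, hzero, hk2, show n + 1 - (n + 1) = 0 by omega,
          show qFact 0 q = 1 by simp [qFact], mul_one, qFact_succ]
        linear_combination qInt (n + 1) q * h
end AuxGauss

section AuxBij

theorem compl_card {m k : ℕ} {S : Finset ℕ} (h1 : S ⊆ range (m + k)) (h2 : S.card = k) :
    (range (m + k) \ S).card = m := by
  rw [Finset.card_sdiff_of_subset h1, Finset.card_range, h2]
  omega

theorem emb_congr (s s' : Finset ℕ) (hss : s = s') {j : ℕ} (h : s.card = j) (h' : s'.card = j)
    (x : Fin j) : s.orderEmbOfFin h x = s'.orderEmbOfFin h' x := by subst hss; rfl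

theorem iso_symm_emb (s : Finset ℕ) {j : ℕ} (h : s.card = j) (x : Fin j)
    (hm : s.orderEmbOfFin h x ∈ s) :
    (s.orderIsoOfFin h).symm ⟨s.orderEmbOfFin h x, hm⟩ = x := by
  have h1 : (⟨s.orderEmbOfFin h x, hm⟩ : {y // y ∈ s}) = s.orderIsoOfFin h x :=
    Subtype.ext (Finset.coe_orderIsoOfFin_apply s h x).symm
  rw [h1, OrderIso.symm_apply_apply]

theorem emb_iso_symm (s : Finset ℕ) {j : ℕ} (h : s.card = j) (y : {x // x ∈ s}) :
    s.orderEmbOfFin h ((s.orderIsoOfFin h).symm y) = (y : ℕ) := by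
  rw [← Finset.coe_orderIsoOfFin_apply, OrderIso.apply_symm_apply]

/-- the permutation underlying the image of `(S, σ)`. -/
def gfun (m k : ℕ) (S : Finset ℕ) (h1 : S ⊆ range (m + k)) (h2 : S.card = k)
    (π : Equiv.Perm (Fin m)) : Fin (m + k) → Fin (m + k) := fun x =>
  if h : (x : ℕ) < m then
    ⟨(range (m + k) \ S).orderEmbOfFin (compl_card h1 h2) (π ⟨x, h⟩),
      Finset.mem_range.1 (Finset.mem_sdiff.1 (Finset.orderEmbOfFin_mem _ _ _)).1⟩
  else
    ⟨S.orderEmbOfFin h2 ⟨k - 1 - ((x : ℕ) - m), by have := x.isLt; omega⟩,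
      Finset.mem_range.1 (h1 (Finset.orderEmbOfFin_mem _ _ _))⟩

theorem gfun_inj {m k : ℕ} {S : Finset ℕ} (h1 : S ⊆ range (m + k)) (h2 : S.card = k)
    (π : Equiv.Perm (Fin m)) : Function.Injective (gfun m k S h1 h2 π) := by
  intro x y hxy
  unfold gfun at hxy
  by_cases hx : (x : ℕ) < m <;> by_cases hy : (y : ℕ) < m
  · rw [dif_pos hx, dif_pos hy] at hxy
    have hv := congrArg Fin.val hxy
    simp only [] at hv
    have := π.injective ((Finset.orderEmbOfFin _ _).injective (by exact hv))
    have := congrArg Fin.val this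
    exact Fin.ext (by simpa using this)
  · rw [dif_pos hx, dif_neg hy] at hxy
    have hv := congrArg Fin.val hxy
    simp only [] at hv
    have hmem := Finset.mem_sdiff.1
      (Finset.orderEmbOfFin_mem (range (m + k) \ S) (compl_card h1 h2) (π ⟨x, hx⟩))
    rw [hv] at hmem
    exact absurd (Finset.orderEmbOfFin_mem S h2 _) hmem.2
  · rw [dif_neg hx, dif_pos hy] at hxy
    have hv := congrArg Fin.val hxy
    simp only [] at hv
    have hmem := Finset.mem_sdiff.1
      (Finset.orderEmbOfFin_mem (range (m + k) \ S) (compl_card h1 h2) (π ⟨y, hy⟩))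
    rw [← hv] at hmem
    exact absurd (Finset.orderEmbOfFin_mem S h2 _) hmem.2
  · rw [dif_neg hx, dif_neg hy] at hxy
    have hv := congrArg Fin.val hxy
    simp only [] at hv
    have := (Finset.orderEmbOfFin S h2).injective (by exact hv)
    have := congrArg Fin.val this
    simp only [] at this
    have hxk := x.isLt
    have hyk := y.isLt
    exact Fin.ext (by omega)

open scoped Classical in
/-- image of `(S, σ)`:  relabelled `σ` followed by the decreasing arrangement of `S`. -/
noncomputable def gmap (m k : ℕ) (p : Finset ℕ × BG m) : BG (m + k) :=
  if h : p.1 ⊆ range (m + k) ∧ p.1.card = k then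
    (Equiv.ofBijective (gfun m k p.1 h.1 h.2 p.2.1)
      (Finite.injective_iff_bijective.1 (gfun_inj h.1 h.2 p.2.1)),
      fun x => if hx : (x : ℕ) < m then p.2.2 ⟨x, hx⟩ else false)
  else (1, fun _ => false)

variable {m k : ℕ} {S : Finset ℕ} {σ : BG m}

theorem gmap_fst_apply (h1 : S ⊆ range (m + k)) (h2 : S.card = k) (x : Fin (m + k)) :
    (gmap m k (S, σ)).1 x = gfun m k S h1 h2 σ.1 x := by
  unfold gmap
  rw [dif_pos ⟨h1, h2⟩]
  rfl

theorem gmap_snd_apply (h1 : S ⊆ range (m + k)) (h2 : S.card = k) (x : Fin (m + k)) :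
    (gmap m k (S, σ)).2 x = if hx : (x : ℕ) < m then σ.2 ⟨x, hx⟩ else false := by
  unfold gmap
  rw [dif_pos ⟨h1, h2⟩]

theorem bval_gmap_lt (h1 : S ⊆ range (m + k)) (h2 : S.card = k) (i : ℕ)
    (hi1 : 1 ≤ i) (hi2 : i ≤ m) :
    bval (gmap m k (S, σ)) i = (if σ.2 ⟨i - 1, by omega⟩ then (-1 : ℤ) else 1) *
      (((range (m + k) \ S).orderEmbOfFin (compl_card h1 h2) (σ.1 ⟨i - 1, by omega⟩) : ℕ) + 1) := by
  rw [bval_def _ i hi1 (by omega)]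
  rw [gmap_fst_apply h1 h2, gmap_snd_apply h1 h2]
  have hlt : ((⟨i - 1, by omega⟩ : Fin (m + k)) : ℕ) < m := by
    simp only []
    omega
  rw [dif_pos hlt]
  unfold gfun
  rw [dif_pos hlt]

theorem bval_gmap_ge (h1 : S ⊆ range (m + k)) (h2 : S.card = k) (i : ℕ)
    (hi1 : m + 1 ≤ i) (hi2 : i ≤ m + k) :
    bval (gmap m k (S, σ)) i = ((S.orderEmbOfFin h2 ⟨m + k - i, by omega⟩ : ℕ) + 1 : ℤ) := by
  rw [bval_def _ i (by omega) (by omega)]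
  rw [gmap_fst_apply h1 h2, gmap_snd_apply h1 h2]
  have hge : ¬ ((⟨i - 1, by omega⟩ : Fin (m + k)) : ℕ) < m := by
    simp only []
    omega
  rw [dif_neg hge]
  have hval : ((gfun m k S h1 h2 σ.1 ⟨i - 1, by omega⟩ : Fin (m + k)) : ℕ)
      = (S.orderEmbOfFin h2 ⟨m + k - i, by omega⟩ : ℕ) := by
    unfold gfun
    rw [dif_neg hge]
    show (S.orderEmbOfFin h2 ⟨k - 1 - ((i - 1) - m), by omega⟩ : ℕ) = _
    exact congrArg _ (Fin.ext (by simp only [Fin.mk.injEq]; omega))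
  rw [hval]
  simp

end AuxBij

section AuxBij2

def hSet (m k : ℕ) (w : BG (m + k)) : Finset ℕ :=
  Finset.image (fun j : Fin k =>
    ((w.1 ⟨m + (j : ℕ), by have := j.isLt; omega⟩ : Fin (m + k)) : ℕ)) Finset.univ

theorem hSet_inj (m k : ℕ) (w : BG (m + k)) : Function.Injective
    (fun j : Fin k => ((w.1 ⟨m + (j : ℕ), by have := j.isLt; omega⟩ : Fin (m + k)) : ℕ)) := by
  intro a b hab
  simp only [] at hab
  have h1 := w.1.injective (Fin.ext hab)
  have h2 := congrArg Fin.val h1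
  simp only [] at h2
  exact Fin.ext (by omega)

theorem hSet_card (m k : ℕ) (w : BG (m + k)) : (hSet m k w).card = k := by
  unfold hSet
  rw [Finset.card_image_of_injective _ (hSet_inj m k w), Finset.card_univ, Fintype.card_fin]

theorem hSet_subset (m k : ℕ) (w : BG (m + k)) : hSet m k w ⊆ range (m + k) := by
  intro a ha
  rcases Finset.mem_image.1 ha with ⟨j, _, rfl⟩
  exact Finset.mem_range.2 (Fin.isLt _)

theorem mem_hSet (m k : ℕ) (w : BG (m + k)) (j : Fin k) :
    ((w.1 ⟨m + (j : ℕ), by have := j.isLt; omega⟩ : Fin (m + k)) : ℕ) ∈ hSet m k w := by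
  unfold hSet
  exact Finset.mem_image.2 ⟨j, Finset.mem_univ j, rfl⟩

theorem prefix_mem_compl (m k : ℕ) (w : BG (m + k)) (i : ℕ) (hi : i < m) :
    ((w.1 ⟨i, by omega⟩ : Fin (m + k)) : ℕ) ∈ range (m + k) \ hSet m k w := by
  rw [Finset.mem_sdiff]
  refine ⟨Finset.mem_range.2 (Fin.isLt _), fun hmem => ?_⟩
  rcases Finset.mem_image.1 hmem with ⟨j, _, hj⟩
  have h1 := w.1.injective (Fin.ext hj)
  have h2 := congrArg Fin.val h1
  simp only [] at h2
  omega

noncomputable def hfun (m k : ℕ) (w : BG (m + k)) : Fin m → Fin m := fun i =>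
  ((range (m + k) \ hSet m k w).orderIsoOfFin
      (compl_card (hSet_subset m k w) (hSet_card m k w))).symm
    ⟨((w.1 ⟨(i : ℕ), by have := i.isLt; omega⟩ : Fin (m + k)) : ℕ),
      prefix_mem_compl m k w i i.isLt⟩

theorem hfun_inj (m k : ℕ) (w : BG (m + k)) : Function.Injective (hfun m k w) := by
  intro a b hab
  unfold hfun at hab
  have h1 := (((range (m + k) \ hSet m k w).orderIsoOfFin
      (compl_card (hSet_subset m k w) (hSet_card m k w))).symm.injective hab)
  have h2 := congrArg Subtype.val h1
  simp only [] at h2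
  have h3 := w.1.injective (Fin.ext h2)
  have h4 := congrArg Fin.val h3
  simp only [] at h4
  exact Fin.ext h4

noncomputable def hmap (m k : ℕ) (w : BG (m + k)) : Finset ℕ × BG m :=
  (hSet m k w,
    (Equiv.ofBijective (hfun m k w) (Finite.injective_iff_bijective.1 (hfun_inj m k w)),
     fun i => w.2 ⟨(i : ℕ), by have := i.isLt; omega⟩))

theorem Dset_descents {m k : ℕ} {w : BG (m + k)} (hw : w ∈ Dset (m + k) k) :
    ∀ j ∈ Ico (m + 1) (m + k), bval w (j + 1) < bval w j := by
  rw [mem_Dset] at hw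
  intro j hj
  apply hw.2
  rw [Finset.mem_Ico] at hj ⊢
  omega

theorem Dset_suffix_pos {m k : ℕ} {w : BG (m + k)} (hw : w ∈ Dset (m + k) k) :
    ∀ i, m + 1 ≤ i → i ≤ m + k → 0 < bval w i := by
  intro i hi1 hi2
  have hpos := (mem_Dset w).1 hw |>.1
  rcases Nat.lt_or_ge i (m + k) with h | h
  · exact lt_trans hpos (bval_chain w (m + 1) (Dset_descents hw) i (m + k) hi1 h (le_refl _))
  · have : i = m + k := by omega
    rw [this]
    exact hpos

theorem Dset_suffix_val {m k : ℕ} {w : BG (m + k)} (hw : w ∈ Dset (m + k) k) (j : Fin k) :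
    ((w.1 ⟨m + (j : ℕ), by have := j.isLt; omega⟩ : Fin (m + k)) : ℕ)
      = (hSet m k w).orderEmbOfFin (hSet_card m k w) ⟨k - 1 - (j : ℕ), by
          have := j.isLt; omega⟩ := by
  have hjk := j.isLt
  set F : Fin k → ℕ := fun x =>
    ((w.1 ⟨m + (k - 1 - (x : ℕ)), by have := x.isLt; omega⟩ : Fin (m + k)) : ℕ) with hF
  have hval : ∀ x : Fin k, (F x : ℤ) + 1 = bval w (m + (k - 1 - (x : ℕ)) + 1) := by
    intro x
    have hx := x.isLt
    have hpos : 0 < bval w (m + (k - 1 - (x : ℕ)) + 1) :=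
      Dset_suffix_pos hw _ (by omega) (by omega)
    have h2 := (bval_pos_elim w (m + (k - 1 - (x : ℕ)) + 1) (by omega) (by omega) hpos).2
    rw [h2]
    have hmk : (⟨m + (k - 1 - (x : ℕ)) + 1 - 1, by omega⟩ : Fin (m + k))
        = ⟨m + (k - 1 - (x : ℕ)), by have := x.isLt; omega⟩ := Fin.ext (by simp only []; omega)
    rw [hmk]
  have hmono : StrictMono F := by
    intro x y hxy
    have hx := x.isLt
    have hy := y.isLt
    have hxy' : (x : ℕ) < (y : ℕ) := hxy
    have hlt : bval w (m + (k - 1 - (x : ℕ)) + 1) < bval w (m + (k - 1 - (y : ℕ)) + 1) := by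
      apply bval_chain w (m + 1) (Dset_descents hw) _ _ (by omega) (by omega) (by omega)
    have h1 := hval x
    have h2 := hval y
    omega
  have hmem : ∀ x : Fin k, F x ∈ hSet m k w := by
    intro x
    have hx := x.isLt
    have hmk : (⟨m + (k - 1 - (x : ℕ)), by have := x.isLt; omega⟩ : Fin (m + k))
        = ⟨m + ((⟨k - 1 - (x : ℕ), by omega⟩ : Fin k) : ℕ), by simp only []; omega⟩ :=
      Fin.ext (by simp only [])
    rw [hF]
    simp only []
    rw [hmk]
    exact mem_hSet m k w _
  have huniq := Finset.orderEmbOfFin_unique (hSet_card m k w) hmem hmono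
  have hkey := congrFun huniq (⟨k - 1 - (j : ℕ), by omega⟩ : Fin k)
  rw [hF] at hkey
  simp only [] at hkey
  have hmk : (⟨m + (k - 1 - (k - 1 - (j : ℕ))), by omega⟩ : Fin (m + k))
      = ⟨m + (j : ℕ), by omega⟩ := Fin.ext (by simp only []; omega)
  rw [hmk] at hkey
  exact hkey

end AuxBij2

section AuxBij3

variable {m k : ℕ} {S : Finset ℕ} {σ : BG m}

theorem gmap_suffix_val (h1 : S ⊆ range (m + k)) (h2 : S.card = k) (j : Fin k) :
    (((gmap m k (S, σ)).1 ⟨m + (j : ℕ), by have := j.isLt; omega⟩ : Fin (m + k)) : ℕ)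
      = S.orderEmbOfFin h2 ⟨k - 1 - (j : ℕ), by have := j.isLt; omega⟩ := by
  have hjk := j.isLt
  rw [gmap_fst_apply h1 h2]
  unfold gfun
  rw [dif_neg (by show ¬ m + (j : ℕ) < m; omega)]
  show (S.orderEmbOfFin h2 ⟨k - 1 - ((m + (j : ℕ)) - m), by omega⟩ : ℕ) = _
  congr 1
  apply Fin.ext
  show k - 1 - (m + (j : ℕ) - m) = k - 1 - (j : ℕ)
  omega

theorem gmap_prefix_val (h1 : S ⊆ range (m + k)) (h2 : S.card = k) (i : Fin m) :
    (((gmap m k (S, σ)).1 ⟨(i : ℕ), by have := i.isLt; omega⟩ : Fin (m + k)) : ℕ)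
      = (range (m + k) \ S).orderEmbOfFin (compl_card h1 h2) (σ.1 i) := by
  rw [gmap_fst_apply h1 h2]
  unfold gfun
  rw [dif_pos (by exact i.isLt)]

theorem gmap_mem_Dset (hk : 1 ≤ k) (h1 : S ⊆ range (m + k)) (h2 : S.card = k) :
    gmap m k (S, σ) ∈ Dset (m + k) k := by
  rw [mem_Dset]
  constructor
  · rw [bval_gmap_ge h1 h2 (m + k) (by omega) (le_refl _)]
    omega
  · intro j hj
    rw [Finset.mem_Ico] at hj
    have hj1 : m + 1 ≤ j := by omega
    have hj2 : j + 1 ≤ m + k := by omega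
    rw [bval_gmap_ge h1 h2 (j + 1) (by omega) (by omega),
      bval_gmap_ge h1 h2 j (by omega) (by omega)]
    have hlt : (S.orderEmbOfFin h2 ⟨m + k - (j + 1), by omega⟩ : ℕ)
        < (S.orderEmbOfFin h2 ⟨m + k - j, by omega⟩ : ℕ) :=
      (Finset.orderEmbOfFin S h2).strictMono (by rw [Fin.mk_lt_mk]; omega)
    omega

theorem gmap_hSet (h1 : S ⊆ range (m + k)) (h2 : S.card = k) :
    hSet m k (gmap m k (S, σ)) = S := by
  ext a
  unfold hSet
  rw [Finset.mem_image]
  constructor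
  · rintro ⟨j, _, rfl⟩
    rw [gmap_suffix_val h1 h2 j]
    exact Finset.orderEmbOfFin_mem S h2 _
  · intro ha
    set x := (S.orderIsoOfFin h2).symm ⟨a, ha⟩ with hx
    have hxk := x.isLt
    refine ⟨⟨k - 1 - (x : ℕ), by omega⟩, Finset.mem_univ _, ?_⟩
    rw [gmap_suffix_val h1 h2]
    have hmk : (⟨k - 1 - ((⟨k - 1 - (x : ℕ), by omega⟩ : Fin k) : ℕ), by omega⟩ : Fin k) = x :=
      Fin.ext (by show k - 1 - (k - 1 - (x : ℕ)) = (x : ℕ); omega)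
    rw [hmk, hx]
    exact emb_iso_symm S h2 ⟨a, ha⟩

theorem hmap_gmap (h1 : S ⊆ range (m + k)) (h2 : S.card = k) :
    hmap m k (gmap m k (S, σ)) = (S, σ) := by
  have hset := gmap_hSet (σ := σ) h1 h2
  refine Prod.ext hset (Prod.ext ?_ ?_)
  · apply Equiv.ext
    intro i
    show hfun m k (gmap m k (S, σ)) i = σ.1 i
    apply ((range (m + k) \ hSet m k (gmap m k (S, σ))).orderEmbOfFin
      (compl_card (hSet_subset _ _ _) (hSet_card _ _ _))).injective
    unfold hfun
    rw [emb_iso_symm]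
    exact Eq.trans (gmap_prefix_val h1 h2 i)
      (emb_congr _ _ (by rw [hset]) (compl_card h1 h2) _ _)
  · funext i
    show (gmap m k (S, σ)).2 ⟨(i : ℕ), by have := i.isLt; omega⟩ = σ.2 i
    rw [gmap_snd_apply h1 h2, dif_pos (by exact i.isLt)]

theorem gmap_hmap {w : BG (m + k)} (hw : w ∈ Dset (m + k) k) :
    gmap m k (hmap m k w) = w := by
  have h1 := hSet_subset m k w
  have h2 := hSet_card m k w
  refine Prod.ext ?_ ?_
  · show (gmap m k (hSet m k w, (hmap m k w).2)).1 = w.1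
    apply Equiv.ext
    intro x
    apply Fin.ext
    by_cases hx : (x : ℕ) < m
    · have hx' : x = ⟨((⟨(x : ℕ), hx⟩ : Fin m) : ℕ), by have := x.isLt; omega⟩ := Fin.ext rfl
      rw [hx', gmap_prefix_val h1 h2 ⟨(x : ℕ), hx⟩]
      have hr : (hmap m k w).2.1 ⟨(x : ℕ), hx⟩ = hfun m k w ⟨(x : ℕ), hx⟩ := rfl
      rw [hr]
      unfold hfun
      rw [emb_iso_symm]
    · have hxk := x.isLt
      have hx' : x = ⟨m + ((⟨(x : ℕ) - m, by omega⟩ : Fin k) : ℕ), by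
          show m + ((x : ℕ) - m) < m + k; omega⟩ :=
        Fin.ext (by show (x : ℕ) = m + ((x : ℕ) - m); omega)
      rw [hx', gmap_suffix_val h1 h2 ⟨(x : ℕ) - m, by omega⟩]
      exact (Dset_suffix_val hw ⟨(x : ℕ) - m, by omega⟩).symm
  · show (gmap m k (hSet m k w, (hmap m k w).2)).2 = w.2
    funext x
    rw [gmap_snd_apply h1 h2]
    by_cases hx : (x : ℕ) < m
    · rw [dif_pos hx]
      exact congrArg w.2 (Fin.ext rfl)
    · rw [dif_neg hx]
      have hxk := x.isLt
      have hpos : 0 < bval w ((x : ℕ) + 1) := Dset_suffix_pos hw _ (by omega) (by omega)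
      have hsign := (bval_pos_elim w ((x : ℕ) + 1) (by omega) (by omega) hpos).1
      have hmk : (⟨(x : ℕ) + 1 - 1, by omega⟩ : Fin (m + k)) = x :=
        Fin.ext (by show (x : ℕ) + 1 - 1 = (x : ℕ); omega)
      rw [hmk] at hsign
      exact hsign.symm

end AuxBij3

section AuxStat

variable {m k : ℕ} {S : Finset ℕ} {σ : BG m}

theorem bval_cmp (h1 : S ⊆ range (m + k)) (h2 : S.card = k) (i j : ℕ)
    (hi : i ≤ m) (hj : j ≤ m) :
    bval (gmap m k (S, σ)) i < bval (gmap m k (S, σ)) j ↔ bval σ i < bval σ j := by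
  rcases Nat.eq_zero_or_pos i with hi0 | hi0 <;> rcases Nat.eq_zero_or_pos j with hj0 | hj0
  · subst hi0; subst hj0; simp
  · subst hi0
    rw [bval_zero, bval_zero, bval_gmap_lt h1 h2 j hj0 hj, bval_def σ j hj0 hj,
      zero_lt_sign, zero_lt_sign]
  · subst hj0
    rw [bval_zero, bval_zero, bval_gmap_lt h1 h2 i hi0 hi, bval_def σ i hi0 hi,
      sign_lt_zero, sign_lt_zero]
  · rw [bval_gmap_lt h1 h2 i hi0 hi, bval_gmap_lt h1 h2 j hj0 hj,
      bval_def σ i hi0 hi, bval_def σ j hj0 hj]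
    apply sign_lt_sign
    · rw [OrderEmbedding.lt_iff_lt]
      exact Iff.rfl
    · rw [OrderEmbedding.lt_iff_lt]
      exact Iff.rfl

theorem bval_cmp_neg (h1 : S ⊆ range (m + k)) (h2 : S.card = k) (i j : ℕ)
    (hi1 : 1 ≤ i) (hi : i ≤ m) (hj1 : 1 ≤ j) (hj : j ≤ m) :
    bval (gmap m k (S, σ)) i < -bval (gmap m k (S, σ)) j ↔ bval σ i < -bval σ j := by
  rw [bval_gmap_lt h1 h2 i hi1 hi, bval_gmap_lt h1 h2 j hj1 hj,
    bval_def σ i hi1 hi, bval_def σ j hj1 hj, neg_sign, neg_sign]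
  apply sign_lt_sign
  · rw [OrderEmbedding.lt_iff_lt]
    exact Iff.rfl
  · rw [OrderEmbedding.lt_iff_lt]
    exact Iff.rfl

theorem bval_neg_iff (h1 : S ⊆ range (m + k)) (h2 : S.card = k) (i : ℕ)
    (hi1 : 1 ≤ i) (hi : i ≤ m) :
    bval (gmap m k (S, σ)) i < 0 ↔ bval σ i < 0 := by
  rw [bval_gmap_lt h1 h2 i hi1 hi, bval_def σ i hi1 hi, sign_lt_zero, sign_lt_zero]

theorem desc_count_eq (h1 : S ⊆ range (m + k)) (h2 : S.card = k)
    (pe : ℕ → Prop) [DecidablePred pe] :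
    ((range m).filter fun i => pe i ∧
        bval (gmap m k (S, σ)) (i + 1) < bval (gmap m k (S, σ)) i).card
      = ((range m).filter fun i => pe i ∧ bval σ (i + 1) < bval σ i).card := by
  congr 1
  apply Finset.filter_congr
  intro i hi
  rw [Finset.mem_range] at hi
  exact and_congr_right fun _ => bval_cmp h1 h2 (i + 1) i (by omega) (by omega)

theorem prod_split (a n : ℕ) (h : a ≤ n) (P : ℕ × ℕ → Prop) [DecidablePred P] :
    ((Icc 1 n ×ˢ Icc 1 n).filter P).card =
      ((Icc 1 a ×ˢ Icc 1 a).filter P).card + ((Icc 1 a ×ˢ Icc (a + 1) n).filter P).card +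
      ((Icc (a + 1) n ×ˢ Icc 1 a).filter P).card +
      ((Icc (a + 1) n ×ˢ Icc (a + 1) n).filter P).card := by
  classical
  have hu : Icc 1 n = Icc 1 a ∪ Icc (a + 1) n := by
    ext x
    simp only [Finset.mem_Icc, Finset.mem_union]
    omega
  have hdis : Disjoint (Icc 1 a) (Icc (a + 1) n) := by
    rw [Finset.disjoint_left]
    intro x hx hx'
    rw [Finset.mem_Icc] at hx hx'
    omega
  have key : ∀ t : Finset ℕ, ((Icc 1 n ×ˢ t).filter P).card =
      ((Icc 1 a ×ˢ t).filter P).card + ((Icc (a + 1) n ×ˢ t).filter P).card := by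
    intro t
    rw [hu, Finset.union_product, Finset.filter_union, Finset.card_union_of_disjoint]
    apply Finset.disjoint_filter_filter
    rw [Finset.disjoint_left]
    rintro ⟨x, y⟩ hxy hxy'
    rw [Finset.mem_product] at hxy hxy'
    exact (Finset.disjoint_left.1 hdis) hxy.1 hxy'.1
  have key2 : ∀ s : Finset ℕ, ((s ×ˢ Icc 1 n).filter P).card =
      ((s ×ˢ Icc 1 a).filter P).card + ((s ×ˢ Icc (a + 1) n).filter P).card := by
    intro s
    rw [hu, Finset.product_union, Finset.filter_union, Finset.card_union_of_disjoint]
    apply Finset.disjoint_filter_filter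
    rw [Finset.disjoint_left]
    rintro ⟨x, y⟩ hxy hxy'
    rw [Finset.mem_product] at hxy hxy'
    exact (Finset.disjoint_left.1 hdis) hxy.2 hxy'.2
  have e1 := key2 (Icc 1 n)
  have e2 := key (Icc 1 a)
  have e3 := key (Icc (a + 1) n)
  omega

theorem card_lt_pairs (s : Finset ℕ) :
    ((s ×ˢ s).filter fun p : ℕ × ℕ => p.1 < p.2).card = s.card * (s.card - 1) / 2 := by
  classical
  set L := (s ×ˢ s).filter fun p : ℕ × ℕ => p.1 < p.2 with hL
  set G := (s ×ˢ s).filter fun p : ℕ × ℕ => p.2 < p.1 with hG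
  set E := (s ×ˢ s).filter fun p : ℕ × ℕ => p.1 = p.2 with hE
  have hLG : L.card = G.card := by
    apply Finset.card_nbij' Prod.swap Prod.swap
    · rintro ⟨x, y⟩ hxy
      rw [hL, Finset.mem_coe, Finset.mem_filter, Finset.mem_product] at hxy
      rw [hG, Finset.mem_coe, Finset.mem_filter, Finset.mem_product]
      exact ⟨⟨hxy.1.2, hxy.1.1⟩, hxy.2⟩
    · rintro ⟨x, y⟩ hxy
      rw [hG, Finset.mem_coe, Finset.mem_filter, Finset.mem_product] at hxy
      rw [hL, Finset.mem_coe, Finset.mem_filter, Finset.mem_product]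
      exact ⟨⟨hxy.1.2, hxy.1.1⟩, hxy.2⟩
    · rintro ⟨x, y⟩ _
      rfl
    · rintro ⟨x, y⟩ _
      rfl
  have hE' : E.card = s.card := by
    apply Finset.card_nbij' Prod.fst (fun x => (x, x))
    · rintro ⟨x, y⟩ hxy
      rw [hE, Finset.mem_coe, Finset.mem_filter, Finset.mem_product] at hxy
      exact hxy.1.1
    · intro x hx
      rw [hE, Finset.mem_coe, Finset.mem_filter, Finset.mem_product]
      exact ⟨⟨hx, hx⟩, rfl⟩
    · rintro ⟨x, y⟩ hxy
      rw [hE, Finset.mem_coe, Finset.mem_filter] at hxy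
      have h : x = y := hxy.2
      subst h
      rfl
    · intro x _
      rfl
  have hsplit : E.card + (L.card + G.card) = s.card * s.card := by
    have h1 := Finset.card_filter_add_card_filter_not
      (s := s ×ˢ s) (p := fun p : ℕ × ℕ => p.1 = p.2)
    have h2 : (s ×ˢ s).filter (fun p : ℕ × ℕ => ¬ p.1 = p.2) = L ∪ G := by
      rw [hL, hG, ← Finset.filter_or]
      apply Finset.filter_congr
      intro p _
      constructor
      · intro hne
        omega
      · intro hor
        omega
    have h3 : Disjoint L G := by
      rw [Finset.disjoint_left]
      rintro p hp hp'
      rw [hL, Finset.mem_filter] at hp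
      rw [hG, Finset.mem_filter] at hp'
      omega
    rw [h2, Finset.card_union_of_disjoint h3, Finset.card_product, ← hE] at h1
    omega
  have hnl : s.card * s.card = s.card * (s.card - 1) + s.card := by
    cases hc : s.card with
    | zero => simp
    | succ j =>
      have : j + 1 - 1 = j := rfl
      rw [this]
      ring
  omega

theorem card_Icc_lt_pairs (a b : ℕ) :
    ((Icc (a + 1) (a + b) ×ˢ Icc (a + 1) (a + b)).filter fun p : ℕ × ℕ => p.1 < p.2).card
      = b * (b - 1) / 2 := by
  rw [card_lt_pairs, Nat.card_Icc]
  congr 2 <;> omega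

end AuxStat

section AuxInv

variable {m k : ℕ}

open scoped Classical in
noncomputable def cmapI (m k : ℕ) (S : Finset ℕ) (h1 : S ⊆ range (m + k)) (h2 : S.card = k)
    (σ : BG m) : ℕ × ℕ → ℕ × ℕ := fun p =>
  if h : 1 ≤ p.1 ∧ p.1 ≤ m ∧ m + 1 ≤ p.2 ∧ p.2 ≤ m + k then
    ((S.orderEmbOfFin h2 ⟨m + k - p.2, by omega⟩ : ℕ),
     ((range (m + k) \ S).orderEmbOfFin (compl_card h1 h2) (σ.1 ⟨p.1 - 1, by omega⟩) : ℕ))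
  else (0, 0)

open scoped Classical in
noncomputable def cmapJ (m k : ℕ) (S : Finset ℕ) (h1 : S ⊆ range (m + k)) (h2 : S.card = k)
    (σ : BG m) : ℕ × ℕ → ℕ × ℕ := fun a =>
  if h : a.1 ∈ S ∧ a.2 ∈ range (m + k) \ S then
    (((σ.1.symm (((range (m + k) \ S).orderIsoOfFin (compl_card h1 h2)).symm
        ⟨a.2, h.2⟩) : Fin m) : ℕ) + 1,
     m + k - (((S.orderIsoOfFin h2).symm ⟨a.1, h.1⟩ : Fin k) : ℕ))
  else (0, 0)

variable {S : Finset ℕ} {σ : BG m}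

theorem cmapI_eval (h1 : S ⊆ range (m + k)) (h2 : S.card = k) (x y : ℕ)
    (hx1 : 1 ≤ x) (hx2 : x ≤ m) (hy1 : m + 1 ≤ y) (hy2 : y ≤ m + k) :
    cmapI m k S h1 h2 σ (x, y) =
      ((S.orderEmbOfFin h2 ⟨m + k - y, by omega⟩ : ℕ),
       ((range (m + k) \ S).orderEmbOfFin (compl_card h1 h2) (σ.1 ⟨x - 1, by omega⟩) : ℕ)) :=
  dif_pos ⟨hx1, hx2, hy1, hy2⟩

theorem cmapJ_eval (h1 : S ⊆ range (m + k)) (h2 : S.card = k) (u v : ℕ)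
    (hu : u ∈ S) (hv : v ∈ range (m + k) \ S) :
    cmapJ m k S h1 h2 σ (u, v) =
      (((σ.1.symm (((range (m + k) \ S).orderIsoOfFin (compl_card h1 h2)).symm
          ⟨v, hv⟩) : Fin m) : ℕ) + 1,
       m + k - (((S.orderIsoOfFin h2).symm ⟨u, hu⟩ : Fin k) : ℕ)) :=
  dif_pos ⟨hu, hv⟩

open scoped Classical in
theorem cross_card (h1 : S ⊆ range (m + k)) (h2 : S.card = k) :
    ((Icc 1 m ×ˢ Icc (m + 1) (m + k)).filter fun p : ℕ × ℕ =>
        (bval (gmap m k (S, σ)) p.2 < bval (gmap m k (S, σ)) p.1 ∨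
         bval (gmap m k (S, σ)) p.2 < -bval (gmap m k (S, σ)) p.1)).card
      = wSn (m + k) S := by
  unfold wSn
  apply Finset.card_nbij' (cmapI m k S h1 h2 σ) (cmapJ m k S h1 h2 σ)
  · rintro ⟨x, y⟩ hp
    rw [Finset.mem_coe, Finset.mem_filter, Finset.mem_product, Finset.mem_Icc, Finset.mem_Icc] at hp
    obtain ⟨⟨⟨hx1, hx2⟩, hy1, hy2⟩, hor⟩ := hp
    rw [cmapI_eval h1 h2 x y hx1 hx2 hy1 hy2]
    rw [Finset.mem_coe, Finset.mem_filter, Finset.mem_product]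
    refine ⟨⟨Finset.orderEmbOfFin_mem _ _ _, Finset.orderEmbOfFin_mem _ _ _⟩, ?_⟩
    show (S.orderEmbOfFin h2 ⟨m + k - y, by omega⟩ : ℕ)
      < ((range (m + k) \ S).orderEmbOfFin (compl_card h1 h2) (σ.1 ⟨x - 1, by omega⟩) : ℕ)
    rw [bval_gmap_ge h1 h2 y (by omega) (by omega),
      bval_gmap_lt h1 h2 x (by omega) (by omega)] at hor
    by_cases hsb : σ.2 ⟨x - 1, by omega⟩ = true
    · rw [if_pos hsb] at hor
      omega
    · rw [if_neg hsb] at hor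
      omega
  · rintro ⟨u, v⟩ huv
    rw [Finset.mem_coe, Finset.mem_filter, Finset.mem_product] at huv
    obtain ⟨⟨hu, hv⟩, hlt⟩ := huv
    rw [cmapJ_eval h1 h2 u v hu hv]
    rw [Finset.mem_coe, Finset.mem_filter, Finset.mem_product, Finset.mem_Icc, Finset.mem_Icc]
    have hiv := (σ.1.symm (((range (m + k) \ S).orderIsoOfFin (compl_card h1 h2)).symm
      ⟨v, hv⟩)).isLt
    have hr := ((S.orderIsoOfFin h2).symm ⟨u, hu⟩).isLt
    refine ⟨⟨⟨by omega, by omega⟩, by omega, by omega⟩, ?_⟩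
    have hby : bval (gmap m k (S, σ))
        (m + k - (((S.orderIsoOfFin h2).symm ⟨u, hu⟩ : Fin k) : ℕ)) = (u : ℤ) + 1 := by
      rw [bval_gmap_ge h1 h2 _ (by omega) (by omega)]
      have hmk : (⟨m + k - (m + k - (((S.orderIsoOfFin h2).symm ⟨u, hu⟩ : Fin k) : ℕ)),
          by omega⟩ : Fin k) = (S.orderIsoOfFin h2).symm ⟨u, hu⟩ := Fin.ext (by
        show m + k - (m + k - (((S.orderIsoOfFin h2).symm ⟨u, hu⟩ : Fin k) : ℕ))
          = (((S.orderIsoOfFin h2).symm ⟨u, hu⟩ : Fin k) : ℕ)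
        omega)
      rw [hmk, emb_iso_symm]
    have hbx : bval (gmap m k (S, σ)) ((((σ.1.symm (((range (m + k) \ S).orderIsoOfFin
        (compl_card h1 h2)).symm ⟨v, hv⟩)) : Fin m) : ℕ) + 1)
        = (if σ.2 (σ.1.symm (((range (m + k) \ S).orderIsoOfFin (compl_card h1 h2)).symm
            ⟨v, hv⟩)) then (-1 : ℤ) else 1) * ((v : ℤ) + 1) := by
      rw [bval_gmap_lt h1 h2 _ (by omega) (by omega)]
      have hmk : (⟨(((σ.1.symm (((range (m + k) \ S).orderIsoOfFin (compl_card h1 h2)).symm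
          ⟨v, hv⟩)) : Fin m) : ℕ) + 1 - 1, by omega⟩ : Fin m)
          = σ.1.symm (((range (m + k) \ S).orderIsoOfFin (compl_card h1 h2)).symm ⟨v, hv⟩) :=
        Fin.ext (by
          show (((σ.1.symm (((range (m + k) \ S).orderIsoOfFin (compl_card h1 h2)).symm
            ⟨v, hv⟩)) : Fin m) : ℕ) + 1 - 1
            = (((σ.1.symm (((range (m + k) \ S).orderIsoOfFin (compl_card h1 h2)).symm
              ⟨v, hv⟩)) : Fin m) : ℕ)
          omega)
      rw [hmk, Equiv.apply_symm_apply, emb_iso_symm]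
    rw [hby, hbx]
    by_cases hsb : σ.2 (σ.1.symm (((range (m + k) \ S).orderIsoOfFin (compl_card h1 h2)).symm
        ⟨v, hv⟩)) = true
    · rw [if_pos hsb]
      right
      omega
    · rw [if_neg hsb]
      left
      omega
  · rintro ⟨x, y⟩ hp
    rw [Finset.mem_coe, Finset.mem_filter, Finset.mem_product, Finset.mem_Icc, Finset.mem_Icc] at hp
    obtain ⟨⟨⟨hx1, hx2⟩, hy1, hy2⟩, -⟩ := hp
    rw [cmapI_eval h1 h2 x y hx1 hx2 hy1 hy2,
      cmapJ_eval h1 h2 _ _ (Finset.orderEmbOfFin_mem _ _ _) (Finset.orderEmbOfFin_mem _ _ _)]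
    rw [iso_symm_emb, iso_symm_emb, Equiv.symm_apply_apply]
    rw [Prod.mk.injEq]
    constructor
    · show ((⟨x - 1, by omega⟩ : Fin m) : ℕ) + 1 = x
      show x - 1 + 1 = x
      omega
    · show m + k - ((⟨m + k - y, by omega⟩ : Fin k) : ℕ) = y
      show m + k - (m + k - y) = y
      omega
  · rintro ⟨u, v⟩ huv
    rw [Finset.mem_coe, Finset.mem_filter, Finset.mem_product] at huv
    obtain ⟨⟨hu, hv⟩, hlt⟩ := huv
    have hiv := (σ.1.symm (((range (m + k) \ S).orderIsoOfFin (compl_card h1 h2)).symm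
      ⟨v, hv⟩)).isLt
    have hr := ((S.orderIsoOfFin h2).symm ⟨u, hu⟩).isLt
    rw [cmapJ_eval h1 h2 u v hu hv,
      cmapI_eval h1 h2 _ _ (by omega) (by omega) (by omega) (by omega)]
    rw [Prod.mk.injEq]
    constructor
    · have hmk : (⟨m + k - (m + k - (((S.orderIsoOfFin h2).symm ⟨u, hu⟩ : Fin k) : ℕ)),
          by omega⟩ : Fin k) = (S.orderIsoOfFin h2).symm ⟨u, hu⟩ := Fin.ext (by
        show m + k - (m + k - (((S.orderIsoOfFin h2).symm ⟨u, hu⟩ : Fin k) : ℕ))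
          = (((S.orderIsoOfFin h2).symm ⟨u, hu⟩ : Fin k) : ℕ)
        omega)
      rw [hmk, emb_iso_symm]
    · have hmk : (⟨(((σ.1.symm (((range (m + k) \ S).orderIsoOfFin (compl_card h1 h2)).symm
          ⟨v, hv⟩)) : Fin m) : ℕ) + 1 - 1, by omega⟩ : Fin m)
          = σ.1.symm (((range (m + k) \ S).orderIsoOfFin (compl_card h1 h2)).symm ⟨v, hv⟩) :=
        Fin.ext (by
          show (((σ.1.symm (((range (m + k) \ S).orderIsoOfFin (compl_card h1 h2)).symm
            ⟨v, hv⟩)) : Fin m) : ℕ) + 1 - 1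
            = (((σ.1.symm (((range (m + k) \ S).orderIsoOfFin (compl_card h1 h2)).symm
              ⟨v, hv⟩)) : Fin m) : ℕ)
          omega)
      rw [hmk, Equiv.apply_symm_apply, emb_iso_symm]

end AuxInv

section AuxInv2

variable {m k : ℕ} {S : Finset ℕ} {σ : BG m}

open scoped Classical in
theorem invB_gmap (h1 : S ⊆ range (m + k)) (h2 : S.card = k) :
    invB (gmap m k (S, σ)) = invB σ + (wSn (m + k) S + k * (k - 1) / 2) := by
  have hm : m ≤ m + k := by omega
  unfold invB
  have e1 := prod_split m (m + k) hm (fun p : ℕ × ℕ => p.1 < p.2 ∧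
    bval (gmap m k (S, σ)) p.2 < bval (gmap m k (S, σ)) p.1)
  have e2 := prod_split m (m + k) hm (fun p : ℕ × ℕ => p.1 < p.2 ∧
    bval (gmap m k (S, σ)) p.2 < -bval (gmap m k (S, σ)) p.1)
  have hu : Icc 1 (m + k) = Icc 1 m ∪ Icc (m + 1) (m + k) := by
    ext x
    simp only [Finset.mem_Icc, Finset.mem_union]
    omega
  have hdis : Disjoint (Icc 1 m) (Icc (m + 1) (m + k)) := by
    rw [Finset.disjoint_left]
    intro x hx hx'
    rw [Finset.mem_Icc] at hx hx'
    omega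
  have e3 : ((Icc 1 (m + k)).filter fun i => bval (gmap m k (S, σ)) i < 0).card =
      ((Icc 1 m).filter fun i => bval (gmap m k (S, σ)) i < 0).card +
      ((Icc (m + 1) (m + k)).filter fun i => bval (gmap m k (S, σ)) i < 0).card := by
    rw [hu, Finset.filter_union, Finset.card_union_of_disjoint
      (Finset.disjoint_filter_filter hdis)]
  have hAA1 : ((Icc 1 m ×ˢ Icc 1 m).filter fun p : ℕ × ℕ => p.1 < p.2 ∧
      bval (gmap m k (S, σ)) p.2 < bval (gmap m k (S, σ)) p.1).card =
      ((Icc 1 m ×ˢ Icc 1 m).filter fun p : ℕ × ℕ => p.1 < p.2 ∧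
        bval σ p.2 < bval σ p.1).card := by
    congr 1
    apply Finset.filter_congr
    rintro ⟨x, y⟩ hxy
    rw [Finset.mem_product, Finset.mem_Icc, Finset.mem_Icc] at hxy
    exact and_congr_right fun _ => bval_cmp h1 h2 y x (by omega) (by omega)
  have hAA2 : ((Icc 1 m ×ˢ Icc 1 m).filter fun p : ℕ × ℕ => p.1 < p.2 ∧
      bval (gmap m k (S, σ)) p.2 < -bval (gmap m k (S, σ)) p.1).card =
      ((Icc 1 m ×ˢ Icc 1 m).filter fun p : ℕ × ℕ => p.1 < p.2 ∧
        bval σ p.2 < -bval σ p.1).card := by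
    congr 1
    apply Finset.filter_congr
    rintro ⟨x, y⟩ hxy
    rw [Finset.mem_product, Finset.mem_Icc, Finset.mem_Icc] at hxy
    exact and_congr_right fun _ =>
      bval_cmp_neg h1 h2 y x (by omega) (by omega) (by omega) (by omega)
  have hBA1 : ((Icc (m + 1) (m + k) ×ˢ Icc 1 m).filter fun p : ℕ × ℕ => p.1 < p.2 ∧
      bval (gmap m k (S, σ)) p.2 < bval (gmap m k (S, σ)) p.1).card = 0 := by
    rw [Finset.card_eq_zero]
    apply Finset.filter_false_of_mem
    rintro ⟨x, y⟩ hxy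
    rw [Finset.mem_product, Finset.mem_Icc, Finset.mem_Icc] at hxy
    rintro ⟨hlt, -⟩
    omega
  have hBA2 : ((Icc (m + 1) (m + k) ×ˢ Icc 1 m).filter fun p : ℕ × ℕ => p.1 < p.2 ∧
      bval (gmap m k (S, σ)) p.2 < -bval (gmap m k (S, σ)) p.1).card = 0 := by
    rw [Finset.card_eq_zero]
    apply Finset.filter_false_of_mem
    rintro ⟨x, y⟩ hxy
    rw [Finset.mem_product, Finset.mem_Icc, Finset.mem_Icc] at hxy
    rintro ⟨hlt, -⟩
    omega
  have hBB1 : ((Icc (m + 1) (m + k) ×ˢ Icc (m + 1) (m + k)).filter fun p : ℕ × ℕ =>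
      p.1 < p.2 ∧ bval (gmap m k (S, σ)) p.2 < bval (gmap m k (S, σ)) p.1).card
        = k * (k - 1) / 2 := by
    rw [← card_Icc_lt_pairs m k]
    congr 1
    apply Finset.filter_congr
    rintro ⟨x, y⟩ hxy
    rw [Finset.mem_product, Finset.mem_Icc, Finset.mem_Icc] at hxy
    constructor
    · rintro ⟨hlt, -⟩
      exact hlt
    · intro hlt
      refine ⟨hlt, ?_⟩
      rw [bval_gmap_ge h1 h2 y (by omega) (by omega),
        bval_gmap_ge h1 h2 x (by omega) (by omega)]
      have := (Finset.orderEmbOfFin S h2).strictMono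
        (show (⟨m + k - y, by omega⟩ : Fin k) < ⟨m + k - x, by omega⟩ from by
          rw [Fin.mk_lt_mk]; omega)
      omega
  have hBB2 : ((Icc (m + 1) (m + k) ×ˢ Icc (m + 1) (m + k)).filter fun p : ℕ × ℕ =>
      p.1 < p.2 ∧ bval (gmap m k (S, σ)) p.2 < -bval (gmap m k (S, σ)) p.1).card = 0 := by
    rw [Finset.card_eq_zero]
    apply Finset.filter_false_of_mem
    rintro ⟨x, y⟩ hxy
    rw [Finset.mem_product, Finset.mem_Icc, Finset.mem_Icc] at hxy
    rintro ⟨hlt, hneg⟩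
    rw [bval_gmap_ge h1 h2 y (by omega) (by omega),
      bval_gmap_ge h1 h2 x (by omega) (by omega)] at hneg
    omega
  have hN1 : ((Icc 1 m).filter fun i => bval (gmap m k (S, σ)) i < 0).card =
      ((Icc 1 m).filter fun i => bval σ i < 0).card := by
    congr 1
    apply Finset.filter_congr
    intro i hi
    rw [Finset.mem_Icc] at hi
    exact bval_neg_iff h1 h2 i (by omega) (by omega)
  have hN2 : ((Icc (m + 1) (m + k)).filter fun i => bval (gmap m k (S, σ)) i < 0).card = 0 := by
    rw [Finset.card_eq_zero]
    apply Finset.filter_false_of_mem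
    intro i hi
    rw [Finset.mem_Icc] at hi
    rw [bval_gmap_ge h1 h2 i (by omega) (by omega)]
    omega
  have hAB : ((Icc 1 m ×ˢ Icc (m + 1) (m + k)).filter fun p : ℕ × ℕ => p.1 < p.2 ∧
        bval (gmap m k (S, σ)) p.2 < bval (gmap m k (S, σ)) p.1).card +
      ((Icc 1 m ×ˢ Icc (m + 1) (m + k)).filter fun p : ℕ × ℕ => p.1 < p.2 ∧
        bval (gmap m k (S, σ)) p.2 < -bval (gmap m k (S, σ)) p.1).card
      = wSn (m + k) S := by
    have hd1 : ((Icc 1 m ×ˢ Icc (m + 1) (m + k)).filter fun p : ℕ × ℕ => p.1 < p.2 ∧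
        bval (gmap m k (S, σ)) p.2 < bval (gmap m k (S, σ)) p.1) =
        ((Icc 1 m ×ˢ Icc (m + 1) (m + k)).filter fun p : ℕ × ℕ =>
          bval (gmap m k (S, σ)) p.2 < bval (gmap m k (S, σ)) p.1) := by
      apply Finset.filter_congr
      rintro ⟨x, y⟩ hxy
      rw [Finset.mem_product, Finset.mem_Icc, Finset.mem_Icc] at hxy
      exact and_iff_right (by omega)
    have hd2 : ((Icc 1 m ×ˢ Icc (m + 1) (m + k)).filter fun p : ℕ × ℕ => p.1 < p.2 ∧
        bval (gmap m k (S, σ)) p.2 < -bval (gmap m k (S, σ)) p.1) =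
        ((Icc 1 m ×ˢ Icc (m + 1) (m + k)).filter fun p : ℕ × ℕ =>
          bval (gmap m k (S, σ)) p.2 < -bval (gmap m k (S, σ)) p.1) := by
      apply Finset.filter_congr
      rintro ⟨x, y⟩ hxy
      rw [Finset.mem_product, Finset.mem_Icc, Finset.mem_Icc] at hxy
      exact and_iff_right (by omega)
    rw [hd1, hd2, ← Finset.card_union_of_disjoint (by
      rw [Finset.disjoint_left]
      intro p hx hx'
      rw [Finset.mem_filter, Finset.mem_product, Finset.mem_Icc, Finset.mem_Icc] at hx hx'
      obtain ⟨⟨⟨hp1, hp2⟩, hp3, hp4⟩, ha⟩ := hx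
      have hb := hx'.2
      have hpos := bval_gmap_ge (σ := σ) h1 h2 p.2 (by omega) (by omega)
      omega), ← Finset.filter_or]
    exact cross_card h1 h2
  omega

end AuxInv2

section AuxUeq

variable {A : Type*} [CommRing A]

theorem wt_gmap (s t q : A) {m k : ℕ} {S : Finset ℕ} {σ : BG m}
    (h1 : S ⊆ range (m + k)) (h2 : S.card = k) :
    wtN s t q m (gmap m k (S, σ)) =
      q ^ (k * (k - 1) / 2 + wSn (m + k) S) *
        (s ^ edesB σ * t ^ odesB σ * q ^ invB σ) := by
  unfold wtN
  rw [desc_count_eq h1 h2 (fun i => Even i), desc_count_eq h1 h2 (fun i => Odd i),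
    invB_gmap h1 h2]
  rw [pow_add, pow_add, pow_add]
  unfold edesB odesB
  ring

theorem U_eq (s t q : A) (m k : ℕ) (hk : 1 ≤ k) :
    (∑ w ∈ Dset (m + k) k, wtN s t q m w)
      = q ^ (k * (k - 1) / 2) * Gpoly (m + k) k q * Bpoly m s t q := by
  classical
  have key : (∑ w ∈ Dset (m + k) k, wtN s t q m w)
      = ∑ p ∈ ((range (m + k)).powersetCard k) ×ˢ (univ : Finset (BG m)),
          q ^ (k * (k - 1) / 2 + wSn (m + k) p.1) *
            (s ^ edesB p.2 * t ^ odesB p.2 * q ^ invB p.2) := by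
    apply Finset.sum_nbij' (hmap m k) (gmap m k)
    · intro w hw
      rw [Finset.mem_product]
      exact ⟨Finset.mem_powersetCard.2 ⟨hSet_subset m k w, hSet_card m k w⟩, Finset.mem_univ _⟩
    · intro p hp
      rw [Finset.mem_product, Finset.mem_powersetCard] at hp
      exact gmap_mem_Dset hk hp.1.1 hp.1.2
    · intro w hw
      exact gmap_hmap hw
    · intro p hp
      rw [Finset.mem_product, Finset.mem_powersetCard] at hp
      exact hmap_gmap hp.1.1 hp.1.2
    · intro w hw
      conv_lhs => rw [← gmap_hmap hw]
      exact wt_gmap s t q (hSet_subset m k w) (hSet_card m k w)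
  rw [key, Finset.sum_product]
  unfold Gpoly Bpoly
  have h1 : ∀ T ∈ (range (m + k)).powersetCard k,
      (∑ σ : BG m, q ^ (k * (k - 1) / 2 + wSn (m + k) T) *
        (s ^ edesB σ * t ^ odesB σ * q ^ invB σ))
      = (q ^ (k * (k - 1) / 2) * q ^ (wSn (m + k) T)) *
          ∑ σ : BG m, s ^ edesB σ * t ^ odesB σ * q ^ invB σ := by
    intro T _
    rw [← Finset.mul_sum, pow_add]
  rw [Finset.sum_congr rfl h1, ← Finset.sum_mul, ← Finset.mul_sum]

end AuxUeq

section AuxFinal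

theorem map_qFact {R S' : Type*} [CommRing R] [CommRing S'] (φ : R →+* S') (j : ℕ) (x : R) :
    φ (qFact j x) = qFact j (φ x) := by
  unfold qFact qInt
  rw [map_prod]
  apply Finset.prod_congr rfl
  intro i _
  rw [map_sum]
  apply Finset.sum_congr rfl
  intro l _
  rw [map_pow]

theorem qFact_zero_eq_one (j : ℕ) : qFact j (0 : ℚ) = 1 := by
  unfold qFact
  apply Finset.prod_eq_one
  intro i _
  unfold qInt
  rw [Finset.sum_eq_single 0]
  · exact pow_zero 0
  · intro b _ hb
    exact zero_pow hb
  · intro hmem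
    exact absurd (Finset.mem_range.2 (by omega)) hmem

theorem qFact_qK_ne (j : ℕ) : qFact j qK ≠ 0 := by
  have heq : qFact j qK = algebraMap (MvPolynomial (Fin 3) ℚ) K (qFact j (MvPolynomial.X 0)) := by
    rw [map_qFact]
    rfl
  rw [heq]
  intro h
  have h0 : qFact j (MvPolynomial.X 0 : MvPolynomial (Fin 3) ℚ) = 0 :=
    (map_eq_zero_iff _ (IsFractionRing.injective (MvPolynomial (Fin 3) ℚ) K)).1 h
  have h1 := congrArg (MvPolynomial.eval (fun _ => (0 : ℚ))) h0
  rw [map_qFact, map_zero, MvPolynomial.eval_X, qFact_zero_eq_one] at h1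
  exact one_ne_zero h1

theorem qBinom_eq_Gpoly (n k : ℕ) (h : k ≤ n) : qBinom n k qK = Gpoly n k qK := by
  have hG := Gpoly_mul qK n k h
  unfold qBinom
  rw [← hG, mul_div_assoc,
    div_self (mul_ne_zero (qFact_qK_ne k) (qFact_qK_ne (n - k))), mul_one]

theorem card_even_Ico (a b : ℕ) :
    ((Ico a b).filter (fun j => Even j)).card = (b + 1) / 2 - (a + 1) / 2 := by
  induction b with
  | zero =>
    rw [Finset.Ico_eq_empty (by omega), Finset.filter_empty, Finset.card_empty]
    omega
  | succ b ih =>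
    rcases Nat.lt_or_ge b a with h | h
    · rw [Finset.Ico_eq_empty (by omega), Finset.filter_empty, Finset.card_empty]
      omega
    · have hins : Ico a (b + 1) = insert b (Ico a b) := by
        ext j
        simp only [Finset.mem_Ico, Finset.mem_insert]
        omega
      rw [hins, Finset.filter_insert]
      by_cases he : Even b
      · rw [if_pos he, Finset.card_insert_of_notMem (by simp), ih]
        have hb2 : b % 2 = 0 := Nat.even_iff.1 he
        omega
      · rw [if_neg he, ih]
        have hb2 : b % 2 = 1 := Nat.odd_iff.1 (Nat.not_even_iff_odd.1 he)
        omega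

theorem card_odd_Ico (a b : ℕ) :
    ((Ico a b).filter (fun j => ¬ Even j)).card = b / 2 - a / 2 := by
  induction b with
  | zero =>
    rw [Finset.Ico_eq_empty (by omega), Finset.filter_empty, Finset.card_empty]
    omega
  | succ b ih =>
    rcases Nat.lt_or_ge b a with h | h
    · rw [Finset.Ico_eq_empty (by omega), Finset.filter_empty, Finset.card_empty]
      omega
    · have hins : Ico a (b + 1) = insert b (Ico a b) := by
        ext j
        simp only [Finset.mem_Ico, Finset.mem_insert]
        omega
      rw [hins, Finset.filter_insert]
      by_cases he : Even b
      · rw [if_neg (by simpa using he), ih]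
        have hb2 : b % 2 = 0 := Nat.even_iff.1 he
        omega
      · rw [if_pos he, Finset.card_insert_of_notMem (by simp), ih]
        have hb2 : b % 2 = 1 := Nat.odd_iff.1 (Nat.not_even_iff_odd.1 he)
        omega

theorem Aprod_eq {A : Type*} [CommRing A] (s t : A) (n k : ℕ) :
    Aprod s t n k = (s - 1) ^ (((Ico (n - k + 1) n).filter (fun j => Even j)).card)
      * (t - 1) ^ (((Ico (n - k + 1) n).filter (fun j => ¬ Even j)).card) := by
  classical
  unfold Aprod
  have h : ∀ j ∈ Ico (n - k + 1) n,
      ((if Even j then s else t) - 1) = (if Even j then s - 1 else t - 1) := by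
    intro j _
    split_ifs <;> rfl
  rw [Finset.prod_congr rfl h, Finset.prod_ite, Finset.prod_const, Finset.prod_const]

theorem assembled (n : ℕ) (hn : 0 < n) :
    BplusPoly n sK tK qK = ∑ k ∈ Icc 1 n,
      Aprod sK tK n k * (qK ^ (k * (k - 1) / 2) * Gpoly n k qK * Bpoly (n - k) sK tK qK) := by
  unfold BplusPoly
  rw [Bplus_eq_sum sK tK qK hn]
  apply Finset.sum_congr rfl
  intro k hk
  rw [Finset.mem_Icc] at hk
  congr 1
  have h := U_eq sK tK qK (n - k) k hk.1
  rw [show n - k + k = n by omega] at h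
  exact h

theorem sum_odd_reindex (n : ℕ) (f : ℕ → K) :
    ∑ k ∈ (Icc 1 n).filter (fun k => ¬ Even k), f k = ∑ r ∈ range ((n + 1) / 2), f (2 * r + 1) := by
  apply Finset.sum_nbij' (i := fun k => (k - 1) / 2) (j := fun r => 2 * r + 1)
  · intro k hk
    rw [Finset.mem_filter, Finset.mem_Icc, Nat.not_even_iff] at hk
    rw [Finset.mem_range]
    omega
  · intro r hr
    rw [Finset.mem_range] at hr
    rw [Finset.mem_filter, Finset.mem_Icc, Nat.not_even_iff]
    omega
  · intro k hk
    rw [Finset.mem_filter, Finset.mem_Icc, Nat.not_even_iff] at hk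
    omega
  · intro r hr
    omega
  · intro k hk
    rw [Finset.mem_filter, Finset.mem_Icc, Nat.not_even_iff] at hk
    exact congrArg f (by omega)

theorem sum_even_reindex (n : ℕ) (f : ℕ → K) :
    ∑ k ∈ (Icc 1 n).filter (fun k => Even k), f k = ∑ r ∈ Icc 1 (n / 2), f (2 * r) := by
  apply Finset.sum_nbij' (i := fun k => k / 2) (j := fun r => 2 * r)
  · intro k hk
    rw [Finset.mem_filter, Finset.mem_Icc, Nat.even_iff] at hk
    rw [Finset.mem_Icc]
    omega
  · intro r hr
    rw [Finset.mem_Icc] at hr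
    rw [Finset.mem_filter, Finset.mem_Icc, Nat.even_iff]
    omega
  · intro k hk
    rw [Finset.mem_filter, Finset.mem_Icc, Nat.even_iff] at hk
    omega
  · intro r hr
    omega
  · intro k hk
    rw [Finset.mem_filter, Finset.mem_Icc, Nat.even_iff] at hk
    exact congrArg f (by omega)

end AuxFinal
theorem q_hyatt_recurrence_typeB :
    (∀ n : ℕ, 0 < n → Even n →
      BplusPoly n sK tK qK =
        (∑ r ∈ range (n / 2), qK ^ (r * (2 * r + 1)) * qBinom n (2 * r + 1) qK
          * Bpoly (n - 2 * r - 1) sK tK qK * (sK - 1) ^ r * (tK - 1) ^ r)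
        + ∑ r ∈ Icc 1 (n / 2), qK ^ (r * (2 * r - 1)) * qBinom n (2 * r) qK
          * Bpoly (n - 2 * r) sK tK qK * (sK - 1) ^ (r - 1) * (tK - 1) ^ r)
    ∧
    (∀ n : ℕ, Odd n →
      BplusPoly n sK tK qK =
        (∑ r ∈ range (n / 2 + 1), qK ^ (r * (2 * r + 1)) * qBinom n (2 * r + 1) qK
          * Bpoly (n - 2 * r - 1) sK tK qK * (sK - 1) ^ r * (tK - 1) ^ r)
        + ∑ r ∈ Icc 1 (n / 2), qK ^ (r * (2 * r - 1)) * qBinom n (2 * r) qK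
          * Bpoly (n - 2 * r) sK tK qK * (sK - 1) ^ r * (tK - 1) ^ (r - 1)) := by
  constructor
  · intro n hn hpar
    have hn2 : n % 2 = 0 := Nat.even_iff.1 hpar
    rw [assembled n hn,
      ← Finset.sum_filter_add_sum_filter_not (Icc 1 n) (fun k => Even k)
        (fun k => Aprod sK tK n k *
          (qK ^ (k * (k - 1) / 2) * Gpoly n k qK * Bpoly (n - k) sK tK qK)),
      add_comm]
    congr 1
    · rw [sum_odd_reindex, show (n + 1) / 2 = n / 2 by omega]
      apply Finset.sum_congr rfl
      intro r hr
      rw [Finset.mem_range] at hr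
      have e1 : ((Ico (n - (2 * r + 1) + 1) n).filter (fun j => Even j)).card = r := by
        rw [card_even_Ico]; omega
      have e2 : ((Ico (n - (2 * r + 1) + 1) n).filter (fun j => ¬ Even j)).card = r := by
        rw [card_odd_Ico]; omega
      have e3 : (2 * r + 1) * (2 * r + 1 - 1) / 2 = r * (2 * r + 1) := by
        rw [show 2 * r + 1 - 1 = 2 * r from rfl]
        rw [show (2 * r + 1) * (2 * r) = r * (2 * r + 1) * 2 from by ring,
          Nat.mul_div_cancel _ (by omega)]
      rw [Aprod_eq, e1, e2, e3, qBinom_eq_Gpoly n (2 * r + 1) (by omega),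
        show n - (2 * r + 1) = n - 2 * r - 1 by omega]
      ring
    · rw [sum_even_reindex]
      apply Finset.sum_congr rfl
      intro r hr
      rw [Finset.mem_Icc] at hr
      have e1 : ((Ico (n - 2 * r + 1) n).filter (fun j => Even j)).card = r - 1 := by
        rw [card_even_Ico]; omega
      have e2 : ((Ico (n - 2 * r + 1) n).filter (fun j => ¬ Even j)).card = r := by
        rw [card_odd_Ico]; omega
      have e3 : 2 * r * (2 * r - 1) / 2 = r * (2 * r - 1) := by
        rw [show 2 * r * (2 * r - 1) = r * (2 * r - 1) * 2 from by ring,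
          Nat.mul_div_cancel _ (by omega)]
      rw [Aprod_eq, e1, e2, e3, qBinom_eq_Gpoly n (2 * r) (by omega)]
      ring
  · intro n hodd
    have hn : 0 < n := hodd.pos
    have hn2 : n % 2 = 1 := Nat.odd_iff.1 hodd
    rw [assembled n hn,
      ← Finset.sum_filter_add_sum_filter_not (Icc 1 n) (fun k => Even k)
        (fun k => Aprod sK tK n k *
          (qK ^ (k * (k - 1) / 2) * Gpoly n k qK * Bpoly (n - k) sK tK qK)),
      add_comm]
    congr 1
    · rw [sum_odd_reindex, show (n + 1) / 2 = n / 2 + 1 by omega]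
      apply Finset.sum_congr rfl
      intro r hr
      rw [Finset.mem_range] at hr
      have e1 : ((Ico (n - (2 * r + 1) + 1) n).filter (fun j => Even j)).card = r := by
        rw [card_even_Ico]; omega
      have e2 : ((Ico (n - (2 * r + 1) + 1) n).filter (fun j => ¬ Even j)).card = r := by
        rw [card_odd_Ico]; omega
      have e3 : (2 * r + 1) * (2 * r + 1 - 1) / 2 = r * (2 * r + 1) := by
        rw [show 2 * r + 1 - 1 = 2 * r from rfl]
        rw [show (2 * r + 1) * (2 * r) = r * (2 * r + 1) * 2 from by ring,
          Nat.mul_div_cancel _ (by omega)]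
      rw [Aprod_eq, e1, e2, e3, qBinom_eq_Gpoly n (2 * r + 1) (by omega),
        show n - (2 * r + 1) = n - 2 * r - 1 by omega]
      ring
    · rw [sum_even_reindex]
      apply Finset.sum_congr rfl
      intro r hr
      rw [Finset.mem_Icc] at hr
      have e1 : ((Ico (n - 2 * r + 1) n).filter (fun j => Even j)).card = r := by
        rw [card_even_Ico]; omega
      have e2 : ((Ico (n - 2 * r + 1) n).filter (fun j => ¬ Even j)).card = r - 1 := by
        rw [card_odd_Ico]; omega
      have e3 : 2 * r * (2 * r - 1) / 2 = r * (2 * r - 1) := by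
        rw [show 2 * r * (2 * r - 1) = r * (2 * r - 1) * 2 from by ring,
          Nat.mul_div_cancel _ (by omega)]
      rw [Aprod_eq, e1, e2, e3, qBinom_eq_Gpoly n (2 * r) (by omega)]
      ring

end
end

section
/- For k ≥ 0 the polynomial B_{2k}(s,t,q) satisfies B_{2k}(s,t,q) = q^{(2k)²} s^k t^k · B_{2k}(s^{−1},t^{−1},q^{−1}), i.e. Σ_{π∈𝔅_{2k}} s^{edes_B(π)} t^{odes_B(π)} q^{inv_B(π)} = Σ_{π∈𝔅_{2k}} s^{k−edes_B(π)} t^{k−odes_B(π)} q^{(2k)²−inv_B(π)}; and B_{2k+1}(s,t,q) = q^{(2k+1)²} s^{k+1} t^k · B_{2k+1}(s^{−1},t^{−1},q^{−1}), i.e. Σ_{π∈𝔅_{2k+1}} s^{edes_B(π)} t^{odes_B(π)} q^{inv_B(π)} = Σ_{π∈𝔅_{2k+1}} s^{k+1−edes_B(π)} t^{k−odes_B(π)} q^{(2k+1)²−inv_B(π)}. -/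
open Finset

noncomputable section

section Aux

/-- the sign-flip involution on `𝔅_n` -/
def negW {n : ℕ} (w : BG n) : BG n := (w.1, fun i => !w.2 i)

lemma negW_invol {n : ℕ} : Function.Involutive (negW (n := n)) := by
  intro w; cases w with
  | mk a b => simp [negW]

lemma bval_negW {n : ℕ} (w : BG n) (i : ℕ) : bval (negW w) i = - bval w i := by
  unfold bval negW
  by_cases h : 1 ≤ i ∧ i ≤ n
  · rw [dif_pos h, dif_pos h]
    have key : ∀ (b : Bool) (z : ℤ),
        (if (!b) = true then -1 else 1) * z = -((if b = true then -1 else 1) * z) := by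
      intro b z; cases b <;> simp
    exact key _ _
  · rw [dif_neg h, dif_neg h]; simp

lemma bval_natAbs {n : ℕ} (w : BG n) {i : ℕ} (h : 1 ≤ i ∧ i ≤ n) :
    (bval w i).natAbs = ((w.1 ⟨i - 1, by omega⟩ : Fin n) : ℕ) + 1 := by
  unfold bval
  rw [dif_pos h]
  cases hb : w.2 ⟨i - 1, by omega⟩ <;> simp [hb] <;> omega

lemma bval_ne_zero {n : ℕ} (w : BG n) {i : ℕ} (h : 1 ≤ i ∧ i ≤ n) : bval w i ≠ 0 := by
  have h2 := bval_natAbs w h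
  intro h0; rw [h0] at h2; simp at h2

lemma bval_natAbs_ne {n : ℕ} (w : BG n) {i j : ℕ} (hi : 1 ≤ i ∧ i ≤ n) (hj : 1 ≤ j ∧ j ≤ n)
    (hij : i ≠ j) : (bval w i).natAbs ≠ (bval w j).natAbs := by
  rw [bval_natAbs w hi, bval_natAbs w hj]
  intro h
  have h2 : w.1 ⟨i - 1, by omega⟩ = w.1 ⟨j - 1, by omega⟩ := Fin.ext (by omega)
  have h3 := w.1.injective h2
  rw [Fin.mk.injEq] at h3
  omega

lemma bval_ne {n : ℕ} (w : BG n) {i j : ℕ} (hi : 1 ≤ i ∧ i ≤ n) (hj : 1 ≤ j ∧ j ≤ n)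
    (hij : i ≠ j) : bval w i ≠ bval w j :=
  fun h => bval_natAbs_ne w hi hj hij (by rw [h])

lemma bval_ne_neg {n : ℕ} (w : BG n) {i j : ℕ} (hi : 1 ≤ i ∧ i ≤ n) (hj : 1 ≤ j ∧ j ≤ n)
    (hij : i ≠ j) : bval w i ≠ - bval w j :=
  fun h => bval_natAbs_ne w hi hj hij (by rw [h, Int.natAbs_neg])

lemma step_ne {n : ℕ} (w : BG n) {i : ℕ} (hi : i < n) : bval w i ≠ bval w (i + 1) := by
  rcases Nat.eq_zero_or_pos i with h0 | h1
  · subst h0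
    have hz : bval w 0 = 0 := by unfold bval; rw [dif_neg (by omega)]
    rw [hz]
    exact (bval_ne_zero w ⟨le_refl 1, by omega⟩).symm
  · exact bval_ne w ⟨h1, by omega⟩ ⟨by omega, by omega⟩ (by omega)

lemma split_card {α : Type*} (S : Finset α) (P : α → Prop) [DecidablePred P] (F G : α → ℤ)
    (h : ∀ a ∈ S, P a → F a ≠ G a) :
    (S.filter fun a => P a ∧ F a < G a).card + (S.filter fun a => P a ∧ G a < F a).card
      = (S.filter P).card := by
  classical
  have e1 : S.filter (fun a => P a ∧ F a < G a)
      = (S.filter P).filter (fun a => F a < G a) := by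
    rw [filter_filter]
  have e2 : S.filter (fun a => P a ∧ G a < F a)
      = (S.filter P).filter (fun a => ¬ F a < G a) := by
    rw [filter_filter]
    apply filter_congr
    intro a ha
    constructor
    · rintro ⟨hp, hlt⟩; exact ⟨hp, by have := h a ha hp; omega⟩
    · rintro ⟨hp, hlt⟩; exact ⟨hp, by have := h a ha hp; omega⟩
  rw [e1, e2, card_filter_add_card_filter_not]

lemma card_even_range (n : ℕ) : ((range n).filter (fun i => Even i)).card = (n + 1) / 2 := by
  induction n with
  | zero => simp
  | succ n ih =>
    rw [range_add_one, filter_insert]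
    by_cases h : Even n
    · rw [if_pos h, card_insert_of_notMem (by simp), ih]
      rw [Nat.even_iff] at h; omega
    · rw [if_neg h, ih]
      rw [Nat.even_iff] at h; omega

lemma card_odd_range (n : ℕ) : ((range n).filter (fun i => Odd i)).card = n / 2 := by
  induction n with
  | zero => simp
  | succ n ih =>
    rw [range_add_one, filter_insert]
    by_cases h : Odd n
    · rw [if_pos h, card_insert_of_notMem (by simp), ih]
      rw [Nat.odd_iff] at h; omega
    · rw [if_neg h, ih]
      rw [Nat.odd_iff] at h; omega

lemma edes_easc {n : ℕ} (w : BG n) : edesB w + eascB w = (n + 1) / 2 := by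
  rw [← card_even_range n]
  exact split_card (range n) (fun i => Even i) (fun i => bval w (i + 1)) (fun i => bval w i)
    (fun i hi _ => (step_ne w (mem_range.mp hi)).symm)

lemma odes_oasc {n : ℕ} (w : BG n) : odesB w + oascB w = n / 2 := by
  rw [← card_odd_range n]
  exact split_card (range n) (fun i => Odd i) (fun i => bval w (i + 1)) (fun i => bval w i)
    (fun i hi _ => (step_ne w (mem_range.mp hi)).symm)

lemma edesB_negW {n : ℕ} (w : BG n) : edesB (negW w) = eascB w := by
  unfold edesB eascB
  congr 1
  apply filter_congr
  intro i _
  rw [bval_negW, bval_negW]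
  simp

lemma odesB_negW {n : ℕ} (w : BG n) : odesB (negW w) = oascB w := by
  unfold odesB oascB
  congr 1
  apply filter_congr
  intro i _
  rw [bval_negW, bval_negW]
  simp

lemma two_C (n : ℕ) :
    2 * ((Icc 1 n ×ˢ Icc 1 n).filter fun p : ℕ × ℕ => p.1 < p.2).card + n = n ^ 2 := by
  classical
  set S := Icc 1 n ×ˢ Icc 1 n with hS
  have hcard : S.card = n * n := by rw [hS, card_product]; simp
  have hswap : (S.filter fun p => p.1 < p.2).card = (S.filter fun p => p.2 < p.1).card := by
    apply card_nbij' (fun p => p.swap) (fun p => p.swap)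
    · intro p hp
      simp only [coe_filter, Set.mem_setOf_eq, mem_coe, mem_filter, hS, mem_product] at hp ⊢
      exact ⟨⟨hp.1.2, hp.1.1⟩, hp.2⟩
    · intro p hp
      simp only [coe_filter, Set.mem_setOf_eq, mem_coe, mem_filter, hS, mem_product] at hp ⊢
      exact ⟨⟨hp.1.2, hp.1.1⟩, hp.2⟩
    · intro p _; simp
    · intro p _; simp
  have htot : (S.filter fun p => p.1 < p.2).card
      + (S.filter fun p : ℕ × ℕ => ¬ p.1 < p.2).card = n * n := by
    rw [card_filter_add_card_filter_not, hcard]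
  have hsplit : (S.filter fun p : ℕ × ℕ => ¬ p.1 < p.2).card
      = (S.filter fun p => p.2 < p.1).card + (S.filter fun p => p.1 = p.2).card := by
    have h1 : (S.filter fun p : ℕ × ℕ => ¬ p.1 < p.2).filter (fun p => p.2 < p.1)
        = S.filter fun p => p.2 < p.1 := by
      rw [filter_filter]
      apply filter_congr
      intro p _
      constructor
      · exact fun h => h.2
      · exact fun h => ⟨by omega, h⟩
    have h2 : (S.filter fun p : ℕ × ℕ => ¬ p.1 < p.2).filter (fun p => ¬ p.2 < p.1)
        = S.filter fun p => p.1 = p.2 := by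
      rw [filter_filter]
      apply filter_congr
      intro p _
      constructor
      · intro h; omega
      · intro h; omega
    rw [← h1, ← h2, card_filter_add_card_filter_not]
  have hdiag : (S.filter fun p : ℕ × ℕ => p.1 = p.2).card = n := by
    have himg : (S.filter fun p : ℕ × ℕ => p.1 = p.2) = (Icc 1 n).image (fun i => (i, i)) := by
      ext p
      simp only [mem_filter, hS, mem_product, mem_image, mem_Icc]
      constructor
      · rintro ⟨⟨⟨ha1, ha2⟩, _⟩, h⟩
        exact ⟨p.1, ⟨ha1, ha2⟩, by rw [Prod.ext_iff]; exact ⟨rfl, h⟩⟩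
      · rintro ⟨i, hi, h⟩
        rw [← h]
        exact ⟨⟨⟨hi.1, hi.2⟩, ⟨hi.1, hi.2⟩⟩, rfl⟩
    rw [himg, card_image_of_injective _ (fun a b h => (Prod.ext_iff.mp h).1)]
    simp
  have hsq : n ^ 2 = n * n := sq n
  linarith

lemma invB_add_negW {n : ℕ} (w : BG n) : invB w + invB (negW w) = n ^ 2 := by
  classical
  have hC := two_C n
  have h1 : ((Icc 1 n ×ˢ Icc 1 n).filter fun p => p.1 < p.2 ∧ bval w p.2 < bval w p.1).card
      + ((Icc 1 n ×ˢ Icc 1 n).filter fun p => p.1 < p.2 ∧ bval w p.1 < bval w p.2).card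
      = ((Icc 1 n ×ˢ Icc 1 n).filter fun p : ℕ × ℕ => p.1 < p.2).card := by
    refine split_card _ (fun p : ℕ × ℕ => p.1 < p.2) (fun p => bval w p.2) (fun p => bval w p.1) ?_
    intro p hp hlt
    simp only [mem_product, mem_Icc] at hp
    exact bval_ne w ⟨hp.2.1, hp.2.2⟩ ⟨hp.1.1, hp.1.2⟩ (by omega)
  have h2 : ((Icc 1 n ×ˢ Icc 1 n).filter fun p => p.1 < p.2 ∧ bval w p.2 < - bval w p.1).card
      + ((Icc 1 n ×ˢ Icc 1 n).filter fun p => p.1 < p.2 ∧ - bval w p.1 < bval w p.2).card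
      = ((Icc 1 n ×ˢ Icc 1 n).filter fun p : ℕ × ℕ => p.1 < p.2).card := by
    refine split_card _ (fun p : ℕ × ℕ => p.1 < p.2) (fun p => bval w p.2) (fun p => - bval w p.1) ?_
    intro p hp hlt
    simp only [mem_product, mem_Icc] at hp
    exact bval_ne_neg w ⟨hp.2.1, hp.2.2⟩ ⟨hp.1.1, hp.1.2⟩ (by omega)
  have h3 : ((Icc 1 n).filter fun i => bval w i < 0).card
      + ((Icc 1 n).filter fun i => (0 : ℤ) < bval w i).card = n := by
    have h := split_card (Icc 1 n) (fun _ => True) (fun i => bval w i) (fun _ => (0 : ℤ))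
      (fun i hi _ => bval_ne_zero w (by simpa using hi))
    simp only [true_and, filter_true] at h
    rw [h]
    simp
  have e1 : ((Icc 1 n ×ˢ Icc 1 n).filter fun p =>
        p.1 < p.2 ∧ bval (negW w) p.2 < bval (negW w) p.1)
      = ((Icc 1 n ×ˢ Icc 1 n).filter fun p => p.1 < p.2 ∧ bval w p.1 < bval w p.2) := by
    apply filter_congr
    intro p _
    rw [bval_negW, bval_negW]
    simp
  have e2 : ((Icc 1 n ×ˢ Icc 1 n).filter fun p =>
        p.1 < p.2 ∧ bval (negW w) p.2 < - bval (negW w) p.1)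
      = ((Icc 1 n ×ˢ Icc 1 n).filter fun p => p.1 < p.2 ∧ - bval w p.1 < bval w p.2) := by
    apply filter_congr
    intro p _
    rw [bval_negW, bval_negW]
    constructor
    · rintro ⟨hlt, h⟩; exact ⟨hlt, by omega⟩
    · rintro ⟨hlt, h⟩; exact ⟨hlt, by omega⟩
  have e3 : ((Icc 1 n).filter fun i => bval (negW w) i < 0)
      = ((Icc 1 n).filter fun i => (0 : ℤ) < bval w i) := by
    apply filter_congr
    intro i _
    rw [bval_negW]
    simp
  unfold invB
  rw [e1, e2, e3]
  linarith

lemma edesB_le {n : ℕ} (w : BG n) : edesB w ≤ (n + 1) / 2 := by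
  have := edes_easc w; omega

lemma odesB_le {n : ℕ} (w : BG n) : odesB w ≤ n / 2 := by
  have := odes_oasc w; omega

lemma invB_le {n : ℕ} (w : BG n) : invB w ≤ n ^ 2 := by
  rw [← invB_add_negW w]; exact Nat.le_add_right _ _

lemma sub_edesB {n : ℕ} (w : BG n) : (n + 1) / 2 - edesB (negW w) = edesB w := by
  rw [edesB_negW]; have := edes_easc w; omega

lemma sub_odesB {n : ℕ} (w : BG n) : n / 2 - odesB (negW w) = odesB w := by
  rw [odesB_negW]; have := odes_oasc w; omega

lemma sub_invB {n : ℕ} (w : BG n) : n ^ 2 - invB (negW w) = invB w := by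
  rw [← invB_add_negW w]; omega

lemma Bpoly_eq_sum {A : Type*} [CommRing A] (n : ℕ) (s t q : A) :
    Bpoly n s t q
      = ∑ w : BG n, s ^ ((n + 1) / 2 - edesB w) * t ^ (n / 2 - odesB w) * q ^ (n ^ 2 - invB w) := by
  rw [Bpoly]
  rw [show (∑ w : BG n,
        s ^ ((n + 1) / 2 - edesB w) * t ^ (n / 2 - odesB w) * q ^ (n ^ 2 - invB w))
      = ∑ w : BG n, s ^ ((n + 1) / 2 - edesB (negW w)) * t ^ (n / 2 - odesB (negW w))
          * q ^ (n ^ 2 - invB (negW w)) from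
    (Fintype.sum_bijective negW negW_invol.bijective _ _ (fun x => rfl)).symm]
  apply Finset.sum_congr rfl
  intro w _
  rw [sub_edesB, sub_odesB, sub_invB]

lemma Bpoly_mul {F : Type*} [Field F] (n : ℕ) (s t q : F) (hs : s ≠ 0) (ht : t ≠ 0)
    (hq : q ≠ 0) :
    q ^ (n ^ 2) * s ^ ((n + 1) / 2) * t ^ (n / 2) * Bpoly n s⁻¹ t⁻¹ q⁻¹
      = ∑ w : BG n, s ^ ((n + 1) / 2 - edesB w) * t ^ (n / 2 - odesB w) * q ^ (n ^ 2 - invB w) := by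
  rw [Bpoly, Finset.mul_sum]
  apply Finset.sum_congr rfl
  intro w _
  rw [inv_pow, inv_pow, inv_pow,
    pow_sub₀ s hs (edesB_le w), pow_sub₀ t ht (odesB_le w), pow_sub₀ q hq (invB_le w)]
  ring

lemma qK_ne : qK ≠ 0 := by
  rw [qK, Ne, IsFractionRing.to_map_eq_zero_iff]
  exact MvPolynomial.X_ne_zero 0

lemma sK_ne : sK ≠ 0 := by
  rw [sK, Ne, IsFractionRing.to_map_eq_zero_iff]
  exact MvPolynomial.X_ne_zero 1

lemma tK_ne : tK ≠ 0 := by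
  rw [tK, Ne, IsFractionRing.to_map_eq_zero_iff]
  exact MvPolynomial.X_ne_zero 2

end Aux

theorem typeB_reciprocity :
    -- even case `n = 2k`, multiplicative form
    (∀ k : ℕ,
      Bpoly (2 * k) sK tK qK =
        qK ^ ((2 * k) ^ 2) * sK ^ k * tK ^ k * Bpoly (2 * k) sK⁻¹ tK⁻¹ qK⁻¹)
    ∧ -- even case, as an identity of sums
    (∀ k : ℕ,
      Bpoly (2 * k) sK tK qK =
        ∑ w : BG (2 * k),
          sK ^ (k - edesB w) * tK ^ (k - odesB w) * qK ^ ((2 * k) ^ 2 - invB w))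
    ∧ -- odd case `n = 2k+1`, multiplicative form
    (∀ k : ℕ,
      Bpoly (2 * k + 1) sK tK qK =
        qK ^ ((2 * k + 1) ^ 2) * sK ^ (k + 1) * tK ^ k * Bpoly (2 * k + 1) sK⁻¹ tK⁻¹ qK⁻¹)
    ∧ -- odd case, as an identity of sums
    (∀ k : ℕ,
      Bpoly (2 * k + 1) sK tK qK =
        ∑ w : BG (2 * k + 1),
          sK ^ (k + 1 - edesB w) * tK ^ (k - odesB w) * qK ^ ((2 * k + 1) ^ 2 - invB w)) := by
  refine ⟨fun k => ?_, fun k => ?_, fun k => ?_, fun k => ?_⟩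
  · have h := Bpoly_mul (2 * k) sK tK qK sK_ne tK_ne qK_ne
    have h2 := Bpoly_eq_sum (2 * k) sK tK qK
    rw [show (2 * k + 1) / 2 = k from by omega, show 2 * k / 2 = k from by omega] at h h2
    rw [h2, ← h]
  · have h2 := Bpoly_eq_sum (2 * k) sK tK qK
    rw [show (2 * k + 1) / 2 = k from by omega, show 2 * k / 2 = k from by omega] at h2
    exact h2
  · have h := Bpoly_mul (2 * k + 1) sK tK qK sK_ne tK_ne qK_ne
    have h2 := Bpoly_eq_sum (2 * k + 1) sK tK qK
    rw [show (2 * k + 1 + 1) / 2 = k + 1 from by omega,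
      show (2 * k + 1) / 2 = k from by omega] at h h2
    rw [h2, ← h]
  · have h2 := Bpoly_eq_sum (2 * k + 1) sK tK qK
    rw [show (2 * k + 1 + 1) / 2 = k + 1 from by omega,
      show (2 * k + 1) / 2 = k from by omega] at h2
    exact h2


end
end
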